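/- arXiv:2605.28393 — 7 statements merged into one kernel-verified Lean document; each statement's English description precedes it below -/
import Mathlib

section
/- Let q be a complex number with 0 < |q| < 1, and let x, y, z, w be complex numbers with |xy| < 1, |y| < 1, |z| < 1, |w| < 1 and w ≠ 0. Then A(x,y,z,w;q) = A(z/w, w, xy, y; q). -/
/-- The double Lambert series
`A(x,y,z,w;q) = ∑_{n=0}^∞ ∑_{m=n}^∞ x^n y^m / ((1 - w q^n)(1 - z q^m))`,
written with `m = n + j`. -/
noncomputable def doubleLambert (x y z w q : ℂ) : ℂ :=
  ∑' n : ℕ, ∑' j : ℕ,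
    x ^ n * y ^ (n + j) / ((1 - w * q ^ n) * (1 - z * q ^ (n + j)))

private lemma geo_lt {q c : ℂ} (hq : ‖q‖ < 1) (hc : ‖c‖ < 1) (n : ℕ) :
    ‖c * q ^ n‖ < 1 := by
  calc ‖c * q ^ n‖ = ‖c‖ * ‖q‖ ^ n := by rw [norm_mul, norm_pow]
    _ ≤ ‖c‖ * 1 :=
        mul_le_mul_of_nonneg_left (pow_le_one₀ (norm_nonneg q) hq.le) (norm_nonneg c)
    _ < 1 := by simpa using hc

private lemma geo_le {q : ℂ} (hq : ‖q‖ < 1) (c : ℂ) (n : ℕ) :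
    ‖c * q ^ n‖ ≤ ‖c‖ := by
  calc ‖c * q ^ n‖ = ‖c‖ * ‖q‖ ^ n := by rw [norm_mul, norm_pow]
    _ ≤ ‖c‖ * 1 :=
        mul_le_mul_of_nonneg_left (pow_le_one₀ (norm_nonneg q) hq.le) (norm_nonneg c)
    _ = ‖c‖ := mul_one _

set_option maxHeartbeats 1000000 in
private lemma key (x y z w q : ℂ) (hq : ‖q‖ < 1) (hxy : ‖x * y‖ < 1) (hy : ‖y‖ < 1)
    (hz : ‖z‖ < 1) (hw : ‖w‖ < 1) :
    doubleLambert x y z w q = ∑' s : (ℕ × ℕ) × (ℕ × ℕ),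
      x ^ s.1.1 * y ^ (s.1.1 + s.1.2) *
        ((w * q ^ s.1.1) ^ s.2.1 * (z * q ^ (s.1.1 + s.1.2)) ^ s.2.2) := by
  set H : (ℕ × ℕ) × (ℕ × ℕ) → ℂ := fun s =>
    x ^ s.1.1 * y ^ (s.1.1 + s.1.2) *
      ((w * q ^ s.1.1) ^ s.2.1 * (z * q ^ (s.1.1 + s.1.2)) ^ s.2.2) with hHdef
  have hgeo : ∀ {c : ℂ}, ‖c‖ < 1 → Summable fun n : ℕ => ‖c‖ ^ n :=
    fun hc => summable_geometric_of_lt_one (norm_nonneg _) hc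
  -- summability of the bound
  have hB1 : Summable fun p : ℕ × ℕ => ‖x * y‖ ^ p.1 * ‖y‖ ^ p.2 :=
    Summable.mul_of_nonneg (hgeo hxy) (hgeo hy)
      (fun n => pow_nonneg (norm_nonneg _) _) (fun n => pow_nonneg (norm_nonneg _) _)
  have hB2 : Summable fun r : ℕ × ℕ => ‖w‖ ^ r.1 * ‖z‖ ^ r.2 :=
    Summable.mul_of_nonneg (hgeo hw) (hgeo hz)
      (fun n => pow_nonneg (norm_nonneg _) _) (fun n => pow_nonneg (norm_nonneg _) _)
  have hB : Summable fun s : (ℕ × ℕ) × (ℕ × ℕ) =>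
      (‖x * y‖ ^ s.1.1 * ‖y‖ ^ s.1.2) * (‖w‖ ^ s.2.1 * ‖z‖ ^ s.2.2) :=
    Summable.mul_of_nonneg hB1 hB2 (fun p => by positivity) (fun r => by positivity)
  have hHnorm : Summable fun s => ‖H s‖ := by
    apply hB.of_nonneg_of_le (fun s => norm_nonneg _)
    rintro ⟨⟨n, j⟩, ⟨k, l⟩⟩
    have e1 : ‖w * q ^ n‖ ^ k ≤ ‖w‖ ^ k :=
      pow_le_pow_left₀ (norm_nonneg _) (geo_le hq w n) k
    have e2 : ‖z * q ^ (n + j)‖ ^ l ≤ ‖z‖ ^ l :=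
      pow_le_pow_left₀ (norm_nonneg _) (geo_le hq z (n + j)) l
    show ‖x ^ n * y ^ (n + j) * ((w * q ^ n) ^ k * (z * q ^ (n + j)) ^ l)‖ ≤
      ‖x * y‖ ^ n * ‖y‖ ^ j * (‖w‖ ^ k * ‖z‖ ^ l)
    calc ‖x ^ n * y ^ (n + j) * ((w * q ^ n) ^ k * (z * q ^ (n + j)) ^ l)‖
        = ‖x‖ ^ n * ‖y‖ ^ (n + j) * (‖w * q ^ n‖ ^ k * ‖z * q ^ (n + j)‖ ^ l) := by
          rw [norm_mul, norm_mul, norm_mul, norm_pow, norm_pow, norm_pow, norm_pow]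
      _ ≤ ‖x‖ ^ n * ‖y‖ ^ (n + j) * (‖w‖ ^ k * ‖z‖ ^ l) :=
          mul_le_mul_of_nonneg_left
            (mul_le_mul e1 e2 (by positivity) (by positivity)) (by positivity)
      _ = ‖x * y‖ ^ n * ‖y‖ ^ j * (‖w‖ ^ k * ‖z‖ ^ l) := by
          rw [norm_mul, mul_pow, pow_add]; ring
  have hHsum : Summable H := hHnorm.of_norm
  have inner : ∀ p : ℕ × ℕ, ∑' r : ℕ × ℕ, H (p, r) =
      x ^ p.1 * y ^ (p.1 + p.2) / ((1 - w * q ^ p.1) * (1 - z * q ^ (p.1 + p.2))) := by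
    rintro ⟨n, j⟩
    have ha := geo_lt hq hw n
    have hb := geo_lt hq hz (n + j)
    have h1 : Summable fun k : ℕ => ‖(w * q ^ n) ^ k‖ := by
      simpa [norm_pow] using hgeo ha
    have h2 : Summable fun l : ℕ => ‖(z * q ^ (n + j)) ^ l‖ := by
      simpa [norm_pow] using hgeo hb
    calc ∑' r : ℕ × ℕ, H ((n, j), r)
        = ∑' r : ℕ × ℕ, x ^ n * y ^ (n + j) *
            ((w * q ^ n) ^ r.1 * (z * q ^ (n + j)) ^ r.2) := rfl
      _ = x ^ n * y ^ (n + j) *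
            ∑' r : ℕ × ℕ, (w * q ^ n) ^ r.1 * (z * q ^ (n + j)) ^ r.2 := tsum_mul_left
      _ = x ^ n * y ^ (n + j) *
            ((∑' k : ℕ, (w * q ^ n) ^ k) * ∑' l : ℕ, (z * q ^ (n + j)) ^ l) := by
          rw [tsum_mul_tsum_of_summable_norm h1 h2]
      _ = x ^ n * y ^ (n + j) / ((1 - w * q ^ n) * (1 - z * q ^ (n + j))) := by
          rw [tsum_geometric_of_norm_lt_one ha, tsum_geometric_of_norm_lt_one hb,
            div_eq_mul_inv, mul_inv]
  have hFsum : Summable fun p : ℕ × ℕ =>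
      x ^ p.1 * y ^ (p.1 + p.2) / ((1 - w * q ^ p.1) * (1 - z * q ^ (p.1 + p.2))) :=
    hHsum.prod.congr inner
  calc doubleLambert x y z w q
      = ∑' p : ℕ × ℕ, x ^ p.1 * y ^ (p.1 + p.2) /
          ((1 - w * q ^ p.1) * (1 - z * q ^ (p.1 + p.2))) := (Summable.tsum_prod hFsum).symm
    _ = ∑' p : ℕ × ℕ, ∑' r : ℕ × ℕ, H (p, r) := by
        exact tsum_congr fun p => (inner p).symm
    _ = ∑' s, H s := (Summable.tsum_prod hHsum).symm

theorem stmt0 (q x y z w : ℂ) (hq0 : 0 < ‖q‖) (hq1 : ‖q‖ < 1)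
    (hxy : ‖x * y‖ < 1) (hy : ‖y‖ < 1)
    (hz : ‖z‖ < 1) (hw : ‖w‖ < 1) (hw0 : w ≠ 0) :
    doubleLambert x y z w q = doubleLambert (z / w) w (x * y) y q := by
  have hzw : ‖z / w * w‖ < 1 := by rwa [div_mul_cancel₀ z hw0]
  rw [key x y z w q hq1 hxy hy hz hw, key (z / w) w (x * y) y q hq1 hzw hw hxy hy]
  let e : ((ℕ × ℕ) × (ℕ × ℕ)) ≃ ((ℕ × ℕ) × (ℕ × ℕ)) :=
    ⟨fun s => ((s.2.2, s.2.1), (s.1.2, s.1.1)), fun s => ((s.2.2, s.2.1), (s.1.2, s.1.1)),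
      fun ⟨⟨a, b⟩, ⟨c, d⟩⟩ => rfl, fun ⟨⟨a, b⟩, ⟨c, d⟩⟩ => rfl⟩
  rw [← Equiv.tsum_eq e (fun s : (ℕ × ℕ) × (ℕ × ℕ) =>
    (z / w) ^ s.1.1 * w ^ (s.1.1 + s.1.2) *
      ((y * q ^ s.1.1) ^ s.2.1 * ((x * y) * q ^ (s.1.1 + s.1.2)) ^ s.2.2))]
  apply tsum_congr
  rintro ⟨⟨n, j⟩, ⟨k, l⟩⟩
  show x ^ n * y ^ (n + j) * ((w * q ^ n) ^ k * (z * q ^ (n + j)) ^ l) =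
    (z / w) ^ l * w ^ (l + k) * ((y * q ^ l) ^ j * ((x * y) * q ^ (l + k)) ^ n)
  field_simp
  have hwl : w ^ l * w⁻¹ ^ l = 1 := by rw [← mul_pow, mul_inv_cancel₀ hw0, one_pow]
  linear_combination (-(x ^ n * y ^ n * y ^ j * w ^ k * q ^ (n * k) * q ^ (n * l) * q ^ (j * l) * z ^ l)) * hwl
end

section
/- Let q be a complex number with |q| < 1, and let x, y, z, w be complex numbers with |x| < 1, |y| < 1, |z| < 1, |w| < 1, and such that z q^r ≠ 1, w q^r ≠ 1, y q^r ≠ 1 and (xy) q^r ≠ 1 for every natural number r. Then A(x,y,z,w;q) = w·A(xq, y, z, w; q) + L(z, y, xy; q). -/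
/-- The single Lambert series `L(x,y;q)` with one denominator factor. -/
noncomputable def lambert1 (x y q : ℂ) : ℂ :=
  ∑' n : ℕ, x ^ n / (1 - y * q ^ n)

/-- The single Lambert series `L(x,y₁,y₂;q)` with two denominator factors. -/
noncomputable def lambert2 (x y₁ y₂ q : ℂ) : ℂ :=
  ∑' n : ℕ, x ^ n / ((1 - y₁ * q ^ n) * (1 - y₂ * q ^ n))

/-- `‖c * q ^ n‖ ≤ ‖c‖` when `‖q‖ ≤ 1`. -/
lemma norm_mul_pow_le {c q : ℂ} (hq : ‖q‖ ≤ 1) (n : ℕ) : ‖c * q ^ n‖ ≤ ‖c‖ := by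
  rw [norm_mul, norm_pow]
  calc ‖c‖ * ‖q‖ ^ n ≤ ‖c‖ * 1 := by
        gcongr
        exact pow_le_one₀ (norm_nonneg q) hq
    _ = ‖c‖ := mul_one _

/-- norm of `1 - c * q ^ n` is bounded below. -/
lemma denom_lb {c q : ℂ} (hq : ‖q‖ ≤ 1) (n : ℕ) :
    1 - ‖c‖ ≤ ‖1 - c * q ^ n‖ := by
  have h1 : ‖c * q ^ n‖ ≤ ‖c‖ := norm_mul_pow_le hq n
  have := norm_sub_norm_le (1 : ℂ) (c * q ^ n)
  simp only [norm_one] at this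
  linarith

lemma summable_aux {x y z w q : ℂ} (hx : ‖x‖ < 1) (hy : ‖y‖ < 1)
    (hz : ‖z‖ < 1) (hw : ‖w‖ < 1) (hq : ‖q‖ ≤ 1) :
    Summable fun p : ℕ × ℕ =>
      x ^ p.1 * y ^ (p.1 + p.2) / ((1 - w * q ^ p.1) * (1 - z * q ^ (p.1 + p.2))) := by
  have hw0 : (0:ℝ) < 1 - ‖w‖ := by linarith
  have hz0 : (0:ℝ) < 1 - ‖z‖ := by linarith
  have hxy : ‖x‖ * ‖y‖ < 1 :=
    mul_lt_one_of_nonneg_of_lt_one_left (norm_nonneg x) hx hy.le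
  apply Summable.of_norm_bounded (g := fun p : ℕ × ℕ => (‖x‖ * ‖y‖) ^ p.1 * ‖y‖ ^ p.2 / ((1 - ‖w‖) * (1 - ‖z‖)))
  · exact ((summable_geometric_of_lt_one (by positivity) hxy).mul_of_nonneg
      (summable_geometric_of_lt_one (norm_nonneg y) hy)
      (fun n => by positivity) (fun n => by positivity)).div_const _
  · rintro ⟨n, j⟩
    have hd1 := denom_lb (c := w) hq n
    have hd2 := denom_lb (c := z) hq (n + j)
    rw [norm_div, norm_mul, norm_mul, norm_pow, norm_pow]
    have : (‖x‖ * ‖y‖) ^ n * ‖y‖ ^ j = ‖x‖ ^ n * ‖y‖ ^ (n + j) := by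
      rw [mul_pow, pow_add]; ring
    rw [this]
    have key : (1 - ‖w‖) * (1 - ‖z‖) ≤ ‖1 - w * q ^ n‖ * ‖1 - z * q ^ (n + j)‖ :=
      mul_le_mul hd1 hd2 hz0.le (norm_nonneg _)
    exact div_le_div_of_nonneg_left (by positivity) (mul_pos hw0 hz0) key

set_option maxHeartbeats 1000000 in
lemma summable_G {x y z q : ℂ} (hx : ‖x‖ < 1) (hy : ‖y‖ < 1)
    (hz : ‖z‖ < 1) (hq : ‖q‖ ≤ 1) :
    Summable fun p : ℕ × ℕ × ℕ =>
      z ^ p.1 * ((y * q ^ p.1) ^ p.2.1 * ((x * y) * q ^ p.1) ^ p.2.2) := by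
  have hxy : ‖x‖ * ‖y‖ < 1 :=
    mul_lt_one_of_nonneg_of_lt_one_left (norm_nonneg x) hx hy.le
  have hmaj : Summable (fun p : ℕ × ℕ × ℕ =>
      ‖z‖ ^ p.1 * (‖y‖ ^ p.2.1 * (‖x‖ * ‖y‖) ^ p.2.2)) := by
    have inner : Summable (fun s : ℕ × ℕ => ‖y‖ ^ s.1 * (‖x‖ * ‖y‖) ^ s.2) :=
      (summable_geometric_of_lt_one (norm_nonneg y) hy).mul_of_nonneg
        (summable_geometric_of_lt_one (by positivity) hxy)
        (fun n => by positivity) (fun n => by positivity)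
    exact (summable_geometric_of_lt_one (norm_nonneg z) hz).mul_of_nonneg inner
      (fun n => by positivity) (fun p => by positivity)
  apply Summable.of_norm_bounded hmaj
  rintro ⟨r, a, b⟩
  have h1 : ‖y * q ^ r‖ ≤ ‖y‖ := norm_mul_pow_le hq r
  have h2 : ‖(x * y) * q ^ r‖ ≤ ‖x‖ * ‖y‖ := by
    calc ‖(x * y) * q ^ r‖ ≤ ‖x * y‖ := norm_mul_pow_le hq r
      _ = ‖x‖ * ‖y‖ := norm_mul x y
  rw [norm_mul, norm_mul, norm_pow, norm_pow, norm_pow]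
  gcongr

/-- the key rearrangement: the inner sum equals `lambert2`. -/
lemma S1_eq {x y z q : ℂ} (hx : ‖x‖ < 1) (hy : ‖y‖ < 1)
    (hz : ‖z‖ < 1) (hq : ‖q‖ < 1) :
    (∑' n : ℕ, ∑' j : ℕ, x ^ n * y ^ (n + j) / (1 - z * q ^ (n + j)))
      = lambert2 z y (x * y) q := by
  have hq1 : ‖q‖ ≤ 1 := hq.le
  have hxy : ‖x * y‖ < 1 := by
    rw [norm_mul]
    exact mul_lt_one_of_nonneg_of_lt_one_left (norm_nonneg x) hx hy.le
  set G : ℕ × ℕ × ℕ → ℂ := fun p =>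
    z ^ p.1 * ((y * q ^ p.1) ^ p.2.1 * ((x * y) * q ^ p.1) ^ p.2.2) with hGdef
  have hG : Summable G := summable_G hx hy hz hq1
  let e : ℕ × ℕ × ℕ ≃ ℕ × ℕ × ℕ :=
    ⟨fun p => (p.2.2, p.2.1, p.1), fun p => (p.2.2, p.2.1, p.1),
      fun p => rfl, fun p => rfl⟩
  have hG' : Summable (G ∘ e) := (e.summable_iff).mpr hG
  -- LHS per-term expansion
  have key : ∀ n j : ℕ, x ^ n * y ^ (n + j) / (1 - z * q ^ (n + j))
      = ∑' r : ℕ, (G ∘ e) (n, j, r) := by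
    intro n j
    have hzq : ‖z * q ^ (n + j)‖ < 1 := lt_of_le_of_lt (norm_mul_pow_le hq1 _) hz
    rw [div_eq_mul_inv, ← tsum_geometric_of_norm_lt_one hzq, ← tsum_mul_left]
    refine tsum_congr fun r => ?_
    show x ^ n * y ^ (n + j) * (z * q ^ (n + j)) ^ r
        = z ^ r * ((y * q ^ r) ^ j * ((x * y) * q ^ r) ^ n)
    ring
  calc (∑' n : ℕ, ∑' j : ℕ, x ^ n * y ^ (n + j) / (1 - z * q ^ (n + j)))
      = ∑' n : ℕ, ∑' j : ℕ, ∑' r : ℕ, (G ∘ e) (n, j, r) := by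
        exact tsum_congr fun n => tsum_congr fun j => key n j
    _ = ∑' p : ℕ × ℕ × ℕ, (G ∘ e) p := by
        rw [Summable.tsum_prod' hG' hG'.prod_factor]
        exact tsum_congr fun n =>
          (Summable.tsum_prod' (hG'.prod_factor n) (hG'.prod_factor n).prod_factor).symm
    _ = ∑' p : ℕ × ℕ × ℕ, G p := e.tsum_eq G
    _ = ∑' r : ℕ, ∑' s : ℕ × ℕ, G (r, s) := Summable.tsum_prod' hG hG.prod_factor
    _ = lambert2 z y (x * y) q := by
        refine tsum_congr fun r => ?_
        have hA : ‖y * q ^ r‖ < 1 := lt_of_le_of_lt (norm_mul_pow_le hq1 _) hy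
        have hB : ‖(x * y) * q ^ r‖ < 1 := lt_of_le_of_lt (norm_mul_pow_le hq1 _) hxy
        have hGr : Summable fun s : ℕ × ℕ => G (r, s) := hG.prod_factor r
        rw [Summable.tsum_prod' hGr hGr.prod_factor]
        calc (∑' a : ℕ, ∑' b : ℕ, G (r, a, b))
            = ∑' a : ℕ, (z ^ r * (y * q ^ r) ^ a) * (1 - (x * y) * q ^ r)⁻¹ := by
              refine tsum_congr fun a => ?_
              have : ∀ b : ℕ, G (r, a, b)
                  = (z ^ r * (y * q ^ r) ^ a) * ((x * y) * q ^ r) ^ b := by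
                intro b; show z ^ r * ((y * q ^ r) ^ a * ((x * y) * q ^ r) ^ b) = _; ring
              rw [tsum_congr this, tsum_mul_left, tsum_geometric_of_norm_lt_one hB]
          _ = (z ^ r * (1 - (x * y) * q ^ r)⁻¹) * (1 - y * q ^ r)⁻¹ := by
              have : ∀ a : ℕ, (z ^ r * (y * q ^ r) ^ a) * (1 - (x * y) * q ^ r)⁻¹
                  = (z ^ r * (1 - (x * y) * q ^ r)⁻¹) * (y * q ^ r) ^ a := fun a => by ring
              rw [tsum_congr this, tsum_mul_left, tsum_geometric_of_norm_lt_one hA]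
          _ = z ^ r / ((1 - y * q ^ r) * (1 - (x * y) * q ^ r)) := by
              rw [div_eq_mul_inv, mul_inv]; ring

theorem stmt2 (q x y z w : ℂ) (hq : ‖q‖ < 1)
    (hx : ‖x‖ < 1) (hy : ‖y‖ < 1)
    (hz : ‖z‖ < 1) (hw : ‖w‖ < 1)
    (hz' : ∀ r : ℕ, z * q ^ r ≠ 1) (hw' : ∀ r : ℕ, w * q ^ r ≠ 1)
    (hy' : ∀ r : ℕ, y * q ^ r ≠ 1) (hxy' : ∀ r : ℕ, (x * y) * q ^ r ≠ 1) :
    doubleLambert x y z w q =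
      w * doubleLambert (x * q) y z w q + lambert2 z y (x * y) q := by
  have hq1 : ‖q‖ < 1 := hq
  have hx1 : ‖x‖ < 1 := hx
  have hy1 : ‖y‖ < 1 := hy
  have hz1 : ‖z‖ < 1 := hz
  have hw1 : ‖w‖ < 1 := hw
  have hxq : ‖x * q‖ < 1 := by
    rw [norm_mul]
    exact mul_lt_one_of_nonneg_of_lt_one_left (norm_nonneg x) hx1 hq1.le
  set F : ℕ × ℕ → ℂ := fun p =>
    x ^ p.1 * y ^ (p.1 + p.2) / ((1 - w * q ^ p.1) * (1 - z * q ^ (p.1 + p.2))) with hFdef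
  set F2 : ℕ × ℕ → ℂ := fun p =>
    (x * q) ^ p.1 * y ^ (p.1 + p.2) / ((1 - w * q ^ p.1) * (1 - z * q ^ (p.1 + p.2)))
    with hF2def
  set F1 : ℕ × ℕ → ℂ := fun p =>
    x ^ p.1 * y ^ (p.1 + p.2) / (1 - z * q ^ (p.1 + p.2)) with hF1def
  have hF : Summable F := summable_aux hx1 hy1 hz1 hw1 hq1.le
  have hF2 : Summable F2 := summable_aux hxq hy1 hz1 hw1 hq1.le
  have hF1 : Summable F1 := by
    have := summable_aux (w := 0) hx1 hy1 hz1 (by simp) hq1.le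
    simpa using this
  have hsplit : ∀ p : ℕ × ℕ, F p = F1 p + w * F2 p := by
    rintro ⟨n, j⟩
    have hA : (1 : ℂ) - w * q ^ n ≠ 0 := sub_ne_zero.mpr (Ne.symm (hw' n))
    have hB : (1 : ℂ) - z * q ^ (n + j) ≠ 0 := sub_ne_zero.mpr (Ne.symm (hz' (n + j)))
    show x ^ n * y ^ (n + j) / ((1 - w * q ^ n) * (1 - z * q ^ (n + j)))
      = x ^ n * y ^ (n + j) / (1 - z * q ^ (n + j))
        + w * ((x * q) ^ n * y ^ (n + j) / ((1 - w * q ^ n) * (1 - z * q ^ (n + j))))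
    field_simp
    ring
  have h1 : doubleLambert x y z w q = ∑' p : ℕ × ℕ, F p :=
    (Summable.tsum_prod' hF hF.prod_factor).symm
  have h2 : doubleLambert (x * q) y z w q = ∑' p : ℕ × ℕ, F2 p :=
    (Summable.tsum_prod' hF2 hF2.prod_factor).symm
  have h3 : (∑' p : ℕ × ℕ, F1 p) = lambert2 z y (x * y) q := by
    rw [Summable.tsum_prod' hF1 hF1.prod_factor]
    exact S1_eq hx1 hy1 hz1 hq1
  rw [h1, h2, tsum_congr hsplit, Summable.tsum_add hF1 (hF2.mul_left w), tsum_mul_left, h3]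
  ring
end

section
/- Let q be a complex number with |q| < 1, and let x, y be complex numbers with |x| < 1 and such that y q^r ≠ 1 for every natural number r. Then A(x,x,y,y;q) = (1/2)·L(x,y;q)² + (1/2)·L(x²,y,y;q). -/
set_option maxHeartbeats 1000000


theorem stmt6 (q x y : ℂ) (hq : ‖q‖ < 1)
    (hx : ‖x‖ < 1) (hy : ∀ r : ℕ, y * q ^ r ≠ 1) :
    doubleLambert x x y y q =
      (1 / 2) * (lambert1 x y q) ^ 2 + (1 / 2) * lambert2 (x ^ 2) y y q := by
  classical
  set f : ℕ → ℂ := fun n => x ^ n / (1 - y * q ^ n) with hf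
  -- boundedness of the inverse denominators
  have hqlim : Filter.Tendsto (fun n : ℕ => q ^ n) Filter.atTop (nhds 0) :=
    tendsto_pow_atTop_nhds_zero_of_norm_lt_one hq
  have hden : ∀ n : ℕ, (1 : ℂ) - y * q ^ n ≠ 0 := by
    intro n h
    exact hy n (by linear_combination -h)
  have hlim : Filter.Tendsto (fun n : ℕ => ‖((1 : ℂ) - y * q ^ n)⁻¹‖)
      Filter.atTop (nhds ‖((1 : ℂ) - y * 0)⁻¹‖) := by
    apply Filter.Tendsto.norm
    apply Filter.Tendsto.inv₀
    · exact (tendsto_const_nhds.sub (tendsto_const_nhds.mul hqlim))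
    · simp
  obtain ⟨C, hC⟩ := (hlim.bddAbove_range : BddAbove _)
  have hCn : ∀ n : ℕ, ‖((1 : ℂ) - y * q ^ n)⁻¹‖ ≤ C := fun n =>
    hC (Set.mem_range_self n)
  -- summability of f
  have hfnorm : Summable fun n => ‖f n‖ := by
    refine ((summable_geometric_of_lt_one (norm_nonneg x) hx).mul_left
      C).of_nonneg_of_le (fun n => norm_nonneg _) (fun n => ?_)
    have : f n = x ^ n * (1 - y * q ^ n)⁻¹ := div_eq_mul_inv _ _
    rw [this, norm_mul, norm_pow, mul_comm]
    exact mul_le_mul_of_nonneg_right (hCn n) (by positivity)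
  have hfs : Summable f := hfnorm.of_norm
  -- the product summable family
  set g : ℕ × ℕ → ℂ := fun p => f p.1 * f p.2 with hg
  have hgs : Summable g := summable_mul_of_summable_norm hfnorm hfnorm
  -- the maps
  have hi : Function.Injective (fun p : ℕ × ℕ => (p.1, p.1 + p.2)) := by
    intro a b h
    simp only [Prod.mk.injEq] at h
    obtain ⟨h1, h2⟩ := h
    exact Prod.ext h1 (by omega)
  have hi' : Function.Injective (fun p : ℕ × ℕ => (p.1 + p.2, p.1)) := by
    intro a b h
    simp only [Prod.mk.injEq] at h
    obtain ⟨h1, h2⟩ := h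
    exact Prod.ext h2 (by omega)
  have hd : Function.Injective (fun n : ℕ => ((n, n) : ℕ × ℕ)) := by
    intro a b h
    simp only [Prod.mk.injEq] at h
    exact h.1
  have hrange : Set.range (fun p : ℕ × ℕ => (p.1, p.1 + p.2)) = {p : ℕ × ℕ | p.1 ≤ p.2} := by
    ext ⟨a, b⟩
    simp only [Set.mem_range, Set.mem_setOf_eq, Prod.mk.injEq, Prod.exists]
    constructor
    · rintro ⟨n, j, rfl, rfl⟩; omega
    · intro h; exact ⟨a, b - a, rfl, by omega⟩
  have hrange' : Set.range (fun p : ℕ × ℕ => (p.1 + p.2, p.1)) = {p : ℕ × ℕ | p.2 ≤ p.1} := by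
    ext ⟨a, b⟩
    simp only [Set.mem_range, Set.mem_setOf_eq, Prod.mk.injEq, Prod.exists]
    constructor
    · rintro ⟨n, j, rfl, rfl⟩; omega
    · intro h; exact ⟨b, a - b, by omega, rfl⟩
  have hdrange : Set.range (fun n : ℕ => ((n, n) : ℕ × ℕ)) = {p : ℕ × ℕ | p.1 = p.2} := by
    ext ⟨a, b⟩
    simp only [Set.mem_range, Set.mem_setOf_eq, Prod.mk.injEq]
    constructor
    · rintro ⟨n, rfl, rfl⟩; rfl
    · rintro rfl; exact ⟨a, rfl, rfl⟩
  -- A as a subtype sum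
  have hgi : Summable (g ∘ (fun p : ℕ × ℕ => (p.1, p.1 + p.2))) := hgs.comp_injective hi
  have e1 : ∑' p : {p : ℕ × ℕ | p.1 ≤ p.2}, g p = ∑' nj : ℕ × ℕ, g (nj.1, nj.1 + nj.2) := by
    rw [← hrange]; exact tsum_range g hi
  have e2 : ∑' nj : ℕ × ℕ, g (nj.1, nj.1 + nj.2) = ∑' n : ℕ, ∑' j : ℕ, g (n, n + j) :=
    Summable.tsum_prod hgi
  have hA : doubleLambert x x y y q = ∑' p : {p : ℕ × ℕ | p.1 ≤ p.2}, g p := by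
    rw [e1, e2, doubleLambert]
    apply tsum_congr; intro n; apply tsum_congr; intro j
    simp only [hg, hf]
    rw [div_mul_div_comm]
  have e1' : ∑' p : {p : ℕ × ℕ | p.2 ≤ p.1}, g p = ∑' nj : ℕ × ℕ, g (nj.1 + nj.2, nj.1) := by
    rw [← hrange']; exact tsum_range g hi'
  have hA' : doubleLambert x x y y q = ∑' p : {p : ℕ × ℕ | p.2 ≤ p.1}, g p := by
    rw [hA, e1, e1']
    apply tsum_congr; intro p
    simp only [hg]
    rw [mul_comm]
  -- diagonal sum
  have hD : lambert2 (x ^ 2) y y q = ∑' p : {p : ℕ × ℕ | p.1 = p.2}, g p := by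
    have ed : ∑' p : {p : ℕ × ℕ | p.1 = p.2}, g p = ∑' n : ℕ, g (n, n) := by
      rw [← hdrange]; exact tsum_range g hd
    rw [ed, lambert2]
    apply tsum_congr; intro n
    simp only [hg, hf]
    rw [div_mul_div_comm, ← pow_add, ← pow_mul, two_mul]
  -- full sum
  have hS : (lambert1 x y q) ^ 2 = ∑' p : ℕ × ℕ, g p := by
    rw [sq, lambert1, tsum_mul_tsum_of_summable_norm hfnorm hfnorm]
  -- set decompositions
  have hsplit1 : {p : ℕ × ℕ | p.2 ≤ p.1} = {p : ℕ × ℕ | p.1 = p.2} ∪ {p : ℕ × ℕ | p.2 < p.1} := by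
    ext p; simp only [Set.mem_setOf_eq, Set.mem_union]; omega
  have hsplit2 : (Set.univ : Set (ℕ × ℕ)) = {p : ℕ × ℕ | p.1 ≤ p.2} ∪ {p : ℕ × ℕ | p.2 < p.1} := by
    ext p; simp only [Set.mem_setOf_eq, Set.mem_union, Set.mem_univ, true_iff]; omega
  have hdis1 : Disjoint {p : ℕ × ℕ | p.1 = p.2} {p : ℕ × ℕ | p.2 < p.1} := by
    rw [Set.disjoint_left]; intro p h1 h2; simp only [Set.mem_setOf_eq] at *; omega
  have hdis2 : Disjoint {p : ℕ × ℕ | p.1 ≤ p.2} {p : ℕ × ℕ | p.2 < p.1} := by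
    rw [Set.disjoint_left]; intro p h1 h2; simp only [Set.mem_setOf_eq] at *; omega
  have hsum : (∑' p : {p : ℕ × ℕ | p.1 ≤ p.2}, g p) + ∑' p : {p : ℕ × ℕ | p.2 ≤ p.1}, g p =
      (∑' p : ℕ × ℕ, g p) + ∑' p : {p : ℕ × ℕ | p.1 = p.2}, g p := by
    rw [← tsum_univ g, hsplit2, hsplit1]
    rw [Summable.tsum_union_disjoint hdis2 (hgs.subtype _) (hgs.subtype _),
        Summable.tsum_union_disjoint hdis1 (hgs.subtype _) (hgs.subtype _)]
    ring
  linear_combination (1 / 2 : ℂ) * hsum + (1 / 2 : ℂ) * hA + (1 / 2 : ℂ) * hA'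
    - (1 / 2 : ℂ) * hS - (1 / 2 : ℂ) * hD
end

section
/- Let q be a complex number with 0 < |q| < 1, and let x, z be complex numbers with |xq| < 1, |z q³| < 1, and z q^r ≠ −1 for every positive integer r. Then Σ_{m,n≥1} (−1)^m q^{2mn+m} x^n z^m / ((1 + z q^n)(1 − q^{2m−1})) = x z q² · (Σ_{k=0}^∞ x^k q^k/(1 + z q^{2k+1})) · (Σ_{k=0}^∞ x^k q^{2k}/(1 + z q^{2k+1})) − x z q² · (Σ_{k=0}^∞ q^k/(1 + z q^{2k+1})) · (Σ_{k=0}^∞ x^k q^k/(1 + z q^{k+1})). -/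
open Finset

namespace Stmt9Aux

noncomputable def FF (q x z : ℂ) (n c : ℕ) : ℂ :=
  x ^ (n + 1) * q ^ (n + c + 2) / ((1 + z * q ^ (n + 1)) * (1 + z * q ^ (2 * c + 1)))

lemma delta_bound (q z : ℂ) (hq1 : ‖q‖ < 1)
    (hne : ∀ r : ℕ, 0 < r → (1 + z * q ^ r) ≠ 0) :
    ∃ δ : ℝ, 0 < δ ∧ ∀ r : ℕ, 0 < r → δ ≤ ‖1 + z * q ^ r‖ := by
  have h0 : Filter.Tendsto (fun r : ℕ => ‖z‖ * ‖q‖ ^ r) Filter.atTop (nhds 0) := by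
    have := tendsto_pow_atTop_nhds_zero_of_lt_one (norm_nonneg q) hq1
    simpa using this.const_mul ‖z‖
  have h1 : ∀ᶠ r : ℕ in Filter.atTop, ‖z‖ * ‖q‖ ^ r < 1 / 2 :=
    h0.eventually_lt_const (by norm_num)
  obtain ⟨N, hN⟩ := Filter.eventually_atTop.mp h1
  refine ⟨min (1 / 2) ((range (N + 1)).inf' nonempty_range_add_one fun r => ‖1 + z * q ^ (r + 1)‖),
    ?_, ?_⟩
  · apply lt_min (by norm_num)
    rw [Finset.lt_inf'_iff]
    intro r _
    exact norm_pos_iff.mpr (hne (r + 1) r.succ_pos)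
  · intro r hr
    rcases le_or_gt r N with h | h
    · refine le_trans (min_le_right _ _) ?_
      have hmem : r - 1 ∈ range (N + 1) := by
        simp only [Finset.mem_range]; omega
      have := Finset.inf'_le (fun r => ‖1 + z * q ^ (r + 1)‖) hmem
      have hr1 : r - 1 + 1 = r := by omega
      rwa [hr1] at this
    · refine le_trans (min_le_left _ _) ?_
      have h2 : ‖z * q ^ r‖ < 1 / 2 := by
        rw [norm_mul, norm_pow]; exact hN r h.le
      have h3 : (1 : ℝ) ≤ ‖1 + z * q ^ r‖ + ‖z * q ^ r‖ := by
        calc (1 : ℝ) = ‖(1 + z * q ^ r) + -(z * q ^ r)‖ := by norm_num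
        _ ≤ ‖1 + z * q ^ r‖ + ‖-(z * q ^ r)‖ := norm_add_le _ _
        _ = ‖1 + z * q ^ r‖ + ‖z * q ^ r‖ := by rw [norm_neg]
      linarith


lemma finite_id (q x z : ℂ) (hne : ∀ r : ℕ, 0 < r → (1 + z * q ^ r) ≠ 0) (s : ℕ) :
    ∑ kl ∈ antidiagonal s, x * z * q ^ 2 *
      (x ^ kl.1 * q ^ kl.1 / (1 + z * q ^ (2 * kl.1 + 1)) *
        (x ^ kl.2 * q ^ (2 * kl.2) / (1 + z * q ^ (2 * kl.2 + 1))))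
    = z * ∑ c ∈ range (s + 1), FF q x z s c := by
  have key : ∀ a b : ℕ, a + b = s →
      x * z * q ^ 2 * (x ^ a * q ^ a / (1 + z * q ^ (2 * a + 1)) *
        (x ^ b * q ^ (2 * b) / (1 + z * q ^ (2 * b + 1))))
      = z * x ^ (s + 1) * (q ^ (s + b + 2) - q ^ (s + a + 2)) /
          ((1 + z * q ^ (2 * a + 1)) * (1 + z * q ^ (2 * b + 1)) * (1 + z * q ^ (s + 1)))
        + z * FF q x z s a := by
    intro a b hab
    subst hab
    have h1 := hne (2 * a + 1) (by omega)
    have h2 := hne (2 * b + 1) (by omega)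
    have h3 := hne (a + b + 1) (by omega)
    simp only [FF]
    field_simp
    ring
  rw [Finset.sum_congr rfl fun kl hkl => key kl.1 kl.2 (Finset.HasAntidiagonal.mem_antidiagonal.mp hkl),
    Finset.sum_add_distrib]
  have hanti : ∑ kl ∈ antidiagonal s, z * x ^ (s + 1) * (q ^ (s + kl.2 + 2) - q ^ (s + kl.1 + 2)) /
      ((1 + z * q ^ (2 * kl.1 + 1)) * (1 + z * q ^ (2 * kl.2 + 1)) * (1 + z * q ^ (s + 1))) = 0 := by
    set S := ∑ kl ∈ antidiagonal s, z * x ^ (s + 1) * (q ^ (s + kl.2 + 2) - q ^ (s + kl.1 + 2)) /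
      ((1 + z * q ^ (2 * kl.1 + 1)) * (1 + z * q ^ (2 * kl.2 + 1)) * (1 + z * q ^ (s + 1))) with hS
    have hswap : S = -S := by
      nth_rewrite 1 [hS]
      rw [← Finset.HasAntidiagonal.map_swap_antidiagonal, Finset.sum_map]
      rw [hS, ← Finset.sum_neg_distrib]
      refine Finset.sum_congr rfl fun kl _ => ?_
      simp only [Function.Embedding.coeFn_mk, Prod.fst_swap, Prod.snd_swap]
      ring
    have : S + S = 0 := by linear_combination hswap
    linear_combination this / 2
  rw [hanti, zero_add,
    Finset.Nat.sum_antidiagonal_eq_sum_range_succ (fun a b => z * FF q x z s a) s,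
    ← Finset.mul_sum]


lemma inner_sum (q x z : ℂ) (hq1 : ‖q‖ < 1) (hzq : ‖z * q ^ 3‖ < 1)
    (hne : ∀ r : ℕ, 0 < r → (1 + z * q ^ r) ≠ 0) (n : ℕ) :
    (∑' m : ℕ, (-1) ^ (m + 1) * q ^ (2 * (m + 1) * (n + 1) + (m + 1)) * x ^ (n + 1) * z ^ (m + 1) /
        ((1 + z * q ^ (n + 1)) * (1 - q ^ (2 * m + 1))))
    = -z * ∑' j : ℕ, FF q x z n (n + 1 + j) := by
  have hq0 : 0 ≤ ‖q‖ := norm_nonneg q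
  have hqpow : ∀ k : ℕ, 0 < k → ‖q ^ k‖ < 1 := fun k hk => by
    rw [norm_pow]; exact pow_lt_one₀ hq0 hq1 (by omega)
  -- the double-indexed family
  set g : ℕ → ℕ → ℂ := fun m j =>
    ((-1) ^ (m + 1) * q ^ (2 * (m + 1) * (n + 1) + (m + 1)) * x ^ (n + 1) * z ^ (m + 1) /
      (1 + z * q ^ (n + 1))) * (q ^ (2 * m + 1)) ^ j with hg
  -- summability of g on ℕ × ℕ
  have hzq3 : ∀ k : ℕ, 3 ≤ k → ‖z‖ * ‖q‖ ^ k ≤ ‖z * q ^ 3‖ := by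
    intro k hk
    rw [norm_mul, norm_pow]
    exact mul_le_mul_of_nonneg_left (pow_le_pow_of_le_one hq0 hq1.le hk) (norm_nonneg z)
  have hgsum : Summable (Function.uncurry g) := by
    apply Summable.of_norm_bounded
      (g := fun p : ℕ × ℕ => (‖x‖ ^ (n + 1) * ‖(1 + z * q ^ (n + 1))⁻¹‖) *
        (‖z * q ^ 3‖ ^ p.1 * ‖q‖ ^ p.2))
    · exact ((summable_geometric_of_lt_one (norm_nonneg _) hzq).mul_of_nonneg
        (summable_geometric_of_lt_one hq0 hq1) (fun _ => by positivity)
        (fun _ => by positivity)).mul_left _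
    · rintro ⟨m, j⟩
      have hnorm : ‖Function.uncurry g (m, j)‖ =
          ‖x‖ ^ (n + 1) * ‖(1 + z * q ^ (n + 1))⁻¹‖ *
            (‖z‖ ^ (m + 1) * ‖q‖ ^ (2 * (m + 1) * (n + 1) + (m + 1) + (2 * m + 1) * j)) := by
        simp only [Function.uncurry, hg, div_eq_mul_inv, norm_mul, norm_pow, norm_inv,
          norm_neg, norm_one, one_pow, one_mul]
        ring
      rw [hnorm]
      refine mul_le_mul_of_nonneg_left ?_ ?_
      swap
      · positivity
      calc ‖z‖ ^ (m + 1) * ‖q‖ ^ (2 * (m + 1) * (n + 1) + (m + 1) + (2 * m + 1) * j)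
            ≤ ‖z‖ ^ (m + 1) * (‖q‖ ^ (3 * (m + 1)) * ‖q‖ ^ j) := by
              rw [← pow_add]
              exact mul_le_mul_of_nonneg_left
                (pow_le_pow_of_le_one hq0 hq1.le (by nlinarith)) (by positivity)
        _ = (‖z‖ * ‖q‖ ^ 3) ^ (m + 1) * ‖q‖ ^ j := by
              rw [mul_pow, ← pow_mul]; ring
        _ = ‖z * q ^ 3‖ ^ (m + 1) * ‖q‖ ^ j := by rw [norm_mul, norm_pow]
        _ ≤ ‖z * q ^ 3‖ ^ m * ‖q‖ ^ j := by
              refine mul_le_mul_of_nonneg_right ?_ (by positivity)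
              rw [pow_succ]
              exact mul_le_of_le_one_right (by positivity) hzq.le
  -- rewrite each term as a tsum over j
  have step1 : ∀ m : ℕ,
      (-1) ^ (m + 1) * q ^ (2 * (m + 1) * (n + 1) + (m + 1)) * x ^ (n + 1) * z ^ (m + 1) /
        ((1 + z * q ^ (n + 1)) * (1 - q ^ (2 * m + 1))) = ∑' j : ℕ, g m j := by
    intro m
    rw [hg]
    simp only
    rw [tsum_mul_left, tsum_geometric_of_norm_lt_one (hqpow (2 * m + 1) (by omega))]
    rw [div_mul_eq_div_div, div_eq_mul_inv]
  rw [tsum_congr step1, ← (Summable.tsum_comm hgsum : ∑' (j) (m), g m j = ∑' (m) (j), g m j)]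
  -- evaluate the geometric sum over m for each fixed j
  have step2 : ∀ j : ℕ, (∑' m : ℕ, g m j) = -z * FF q x z n (n + 1 + j) := by
    intro j
    have hd1 : (1 + z * q ^ (n + 1)) ≠ 0 := hne (n + 1) (by omega)
    have hd2 : (1 + z * q ^ (2 * (n + 1 + j) + 1)) ≠ 0 := hne _ (by omega)
    have hptwise : ∀ m : ℕ, g m j =
        (-(x ^ (n + 1) * z * q ^ (2 * n + 3 + j)) / (1 + z * q ^ (n + 1))) *
          (-(z * q ^ (2 * n + 3 + 2 * j))) ^ m := by
      intro m
      rw [hg]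
      simp only
      rw [div_mul_eq_mul_div, div_mul_eq_mul_div, div_eq_div_iff hd1 hd1]
      ring
    rw [tsum_congr hptwise, tsum_mul_left,
      tsum_geometric_of_norm_lt_one (by
        rw [norm_neg]
        calc ‖z * q ^ (2 * n + 3 + 2 * j)‖ = ‖z‖ * ‖q‖ ^ (2 * n + 3 + 2 * j) := by
              rw [norm_mul, norm_pow]
        _ ≤ ‖z * q ^ 3‖ := hzq3 (2 * n + 3 + 2 * j) (by omega)
        _ < 1 := hzq)]
    have hexp : 1 - -(z * q ^ (2 * n + 3 + 2 * j)) = 1 + z * q ^ (2 * (n + 1 + j) + 1) := by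
      rw [sub_neg_eq_add, show 2 * (n + 1 + j) + 1 = 2 * n + 3 + 2 * j from by ring]
    rw [hexp]
    simp only [FF]
    have hexp2 : n + (n + 1 + j) + 2 = 2 * n + 3 + j := by omega
    rw [hexp2]
    field_simp
  rw [tsum_congr step2, tsum_mul_left]


lemma FF_norm_le {q x z : ℂ} {δ : ℝ} (hδ : 0 < δ)
    (hb : ∀ r : ℕ, 0 < r → δ ≤ ‖1 + z * q ^ r‖) (n c : ℕ) :
    ‖FF q x z n c‖ ≤ δ⁻¹ * δ⁻¹ * (‖x * q‖ ^ (n + 1) * ‖q‖ ^ (c + 1)) := by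
  have h1 := hb (n + 1) (by omega)
  have h2 := hb (2 * c + 1) (by omega)
  have hnum : ‖x ^ (n + 1) * q ^ (n + c + 2)‖ = ‖x * q‖ ^ (n + 1) * ‖q‖ ^ (c + 1) := by
    rw [norm_mul, norm_pow, norm_pow, norm_mul, mul_pow,
      show n + c + 2 = (n + 1) + (c + 1) from by omega, pow_add]
    ring
  rw [FF, norm_div, hnum]
  have hden : δ * δ ≤ ‖(1 + z * q ^ (n + 1)) * (1 + z * q ^ (2 * c + 1))‖ := by
    rw [norm_mul]
    exact mul_le_mul h1 h2 hδ.le (norm_nonneg _)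
  calc ‖x * q‖ ^ (n + 1) * ‖q‖ ^ (c + 1) / ‖(1 + z * q ^ (n + 1)) * (1 + z * q ^ (2 * c + 1))‖
      ≤ ‖x * q‖ ^ (n + 1) * ‖q‖ ^ (c + 1) / (δ * δ) := by
        gcongr
  _ = δ⁻¹ * δ⁻¹ * (‖x * q‖ ^ (n + 1) * ‖q‖ ^ (c + 1)) := by
        rw [div_eq_mul_inv, mul_inv]
        ring

lemma FF_summable_prod {q x z : ℂ} {δ : ℝ} (hδ : 0 < δ)
    (hb : ∀ r : ℕ, 0 < r → δ ≤ ‖1 + z * q ^ r‖) (hq1 : ‖q‖ < 1) (hxq : ‖x * q‖ < 1) :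
    Summable (fun p : ℕ × ℕ => FF q x z p.1 p.2) := by
  have h1 : Summable fun n : ℕ => ‖x * q‖ ^ (n + 1) :=
    (summable_nat_add_iff (f := fun n : ℕ => ‖x * q‖ ^ n) 1).mpr
      (summable_geometric_of_lt_one (norm_nonneg _) hxq)
  have h2 : Summable fun n : ℕ => ‖q‖ ^ (n + 1) :=
    (summable_nat_add_iff (f := fun n : ℕ => ‖q‖ ^ n) 1).mpr
      (summable_geometric_of_lt_one (norm_nonneg _) hq1)
  have h3 := h1.mul_of_nonneg h2 (fun n => pow_nonneg (norm_nonneg _) _)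
    (fun n => pow_nonneg (norm_nonneg _) _)
  exact Summable.of_norm_bounded (h3.mul_left (δ⁻¹ * δ⁻¹))
    (fun p => FF_norm_le hδ hb p.1 p.2)

lemma FF_summable_fiber {q x z : ℂ} {δ : ℝ} (hδ : 0 < δ)
    (hb : ∀ r : ℕ, 0 < r → δ ≤ ‖1 + z * q ^ r‖) (hq1 : ‖q‖ < 1) (hxq : ‖x * q‖ < 1)
    (n : ℕ) : Summable (fun c : ℕ => FF q x z n c) :=
  (FF_summable_prod hδ hb hq1 hxq).prod_factor n


lemma norm_div_le_of_le {a d : ℂ} {δ : ℝ} (hδ : 0 < δ) (hd : δ ≤ ‖d‖) :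
    ‖a / d‖ ≤ δ⁻¹ * ‖a‖ := by
  rw [norm_div]
  calc ‖a‖ / ‖d‖ ≤ ‖a‖ / δ := by gcongr
  _ = δ⁻¹ * ‖a‖ := by rw [div_eq_mul_inv]; ring

end Stmt9Aux

open Stmt9Aux in
theorem stmt9 (q x z : ℂ) (hq0 : 0 < ‖q‖) (hq1 : ‖q‖ < 1)
    (hxq : ‖x * q‖ < 1) (hzq : ‖z * q ^ 3‖ < 1)
    (hz : ∀ r : ℕ, 0 < r → z * q ^ r ≠ -1) :
    (∑' n : ℕ, ∑' m : ℕ,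
        (-1) ^ (m + 1) * q ^ (2 * (m + 1) * (n + 1) + (m + 1)) * x ^ (n + 1) * z ^ (m + 1) /
          ((1 + z * q ^ (n + 1)) * (1 - q ^ (2 * m + 1)))) =
      x * z * q ^ 2 * (∑' k : ℕ, x ^ k * q ^ k / (1 + z * q ^ (2 * k + 1)))
          * (∑' k : ℕ, x ^ k * q ^ (2 * k) / (1 + z * q ^ (2 * k + 1)))
        - x * z * q ^ 2 * (∑' k : ℕ, q ^ k / (1 + z * q ^ (2 * k + 1)))
          * (∑' k : ℕ, x ^ k * q ^ k / (1 + z * q ^ (k + 1))) := by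
  have hq1' : ‖q‖ < 1 := by exact hq1
  have hxq' : ‖x * q‖ < 1 := by exact hxq
  have hzq' : ‖z * q ^ 3‖ < 1 := by exact hzq
  have hne : ∀ r : ℕ, 0 < r → (1 + z * q ^ r) ≠ 0 := fun r hr h =>
    hz r hr (by linear_combination h)
  obtain ⟨δ, hδ, hb⟩ := delta_bound q z hq1' hne
  have geoxq := summable_geometric_of_lt_one (norm_nonneg (x * q)) hxq'
  have geoq := summable_geometric_of_lt_one (norm_nonneg q) hq1'
  have hnormxq : ∀ k : ℕ, ‖x ^ k * q ^ k‖ = ‖x * q‖ ^ k := fun k => by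
    rw [norm_mul, norm_pow, norm_pow, norm_mul, mul_pow]
  -- summable norms for the four series
  have hA : Summable fun k : ℕ => ‖x ^ k * q ^ k / (1 + z * q ^ (2 * k + 1))‖ := by
    apply Summable.of_nonneg_of_le (fun k => norm_nonneg _) _ (geoxq.mul_left δ⁻¹)
    intro k
    calc ‖x ^ k * q ^ k / (1 + z * q ^ (2 * k + 1))‖
        ≤ δ⁻¹ * ‖x ^ k * q ^ k‖ := norm_div_le_of_le hδ (hb _ (by omega))
    _ = δ⁻¹ * ‖x * q‖ ^ k := by rw [hnormxq]
  have hB : Summable fun k : ℕ => ‖x ^ k * q ^ (2 * k) / (1 + z * q ^ (2 * k + 1))‖ := by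
    apply Summable.of_nonneg_of_le (fun k => norm_nonneg _) _ (geoxq.mul_left δ⁻¹)
    intro k
    calc ‖x ^ k * q ^ (2 * k) / (1 + z * q ^ (2 * k + 1))‖
        ≤ δ⁻¹ * ‖x ^ k * q ^ (2 * k)‖ := norm_div_le_of_le hδ (hb _ (by omega))
    _ = δ⁻¹ * (‖x * q‖ ^ k * ‖q‖ ^ k) := by
        rw [norm_mul, norm_pow, norm_pow, norm_mul, mul_pow,
          show 2 * k = k + k from by omega, pow_add]
        ring
    _ ≤ δ⁻¹ * (‖x * q‖ ^ k * 1) := by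
        have : ‖q‖ ^ k ≤ 1 := pow_le_one₀ (norm_nonneg q) hq1'.le
        have h0 : (0:ℝ) ≤ δ⁻¹ * ‖x * q‖ ^ k := by positivity
        nlinarith
    _ = δ⁻¹ * ‖x * q‖ ^ k := by ring
  have hC : Summable fun k : ℕ => ‖q ^ k / (1 + z * q ^ (2 * k + 1))‖ := by
    apply Summable.of_nonneg_of_le (fun k => norm_nonneg _) _ (geoq.mul_left δ⁻¹)
    intro k
    calc ‖q ^ k / (1 + z * q ^ (2 * k + 1))‖
        ≤ δ⁻¹ * ‖q ^ k‖ := norm_div_le_of_le hδ (hb _ (by omega))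
    _ = δ⁻¹ * ‖q‖ ^ k := by rw [norm_pow]
  have hD : Summable fun k : ℕ => ‖x ^ k * q ^ k / (1 + z * q ^ (k + 1))‖ := by
    apply Summable.of_nonneg_of_le (fun k => norm_nonneg _) _ (geoxq.mul_left δ⁻¹)
    intro k
    calc ‖x ^ k * q ^ k / (1 + z * q ^ (k + 1))‖
        ≤ δ⁻¹ * ‖x ^ k * q ^ k‖ := norm_div_le_of_le hδ (hb _ (by omega))
    _ = δ⁻¹ * ‖x * q‖ ^ k := by rw [hnormxq]
  -- global summability of FF
  have hFFprod : Summable (fun p : ℕ × ℕ => FF q x z p.1 p.2) :=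
    FF_summable_prod hδ hb hq1' hxq'
  have hfib : ∀ n : ℕ, Summable fun c : ℕ => FF q x z n c :=
    FF_summable_fiber hδ hb hq1' hxq'
  -- splitting of the fiber sums
  have hsplit : ∀ n : ℕ, (∑' c : ℕ, FF q x z n c) =
      (∑ c ∈ range (n + 1), FF q x z n c) + ∑' j : ℕ, FF q x z n (n + 1 + j) := by
    intro n
    rw [← Summable.sum_add_tsum_nat_add (n + 1) (hfib n)]
    congr 1
    exact tsum_congr fun j => by rw [add_comm j (n + 1)]
  -- summability of the finite-part sequence
  have hfinS : Summable (fun n : ℕ => ∑ c ∈ range (n + 1), FF q x z n c) := by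
    have hgeo1 : Summable fun n : ℕ => ‖x * q‖ ^ (n + 1) :=
      (summable_nat_add_iff (f := fun n : ℕ => ‖x * q‖ ^ n) 1).mpr geoxq
    apply Summable.of_norm_bounded (hgeo1.mul_left (δ⁻¹ * δ⁻¹ * (1 - ‖q‖)⁻¹))
    intro n
    have hsum_le : ∑ c ∈ range (n + 1), ‖q‖ ^ c ≤ (1 - ‖q‖)⁻¹ := by
      have h1 := Summable.sum_le_tsum (range (n + 1)) (fun c _ => pow_nonneg (norm_nonneg q) c) geoq
      rwa [tsum_geometric_of_lt_one (norm_nonneg q) hq1'] at h1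
    calc ‖∑ c ∈ range (n + 1), FF q x z n c‖
        ≤ ∑ c ∈ range (n + 1), ‖FF q x z n c‖ := norm_sum_le _ _
    _ ≤ ∑ c ∈ range (n + 1), δ⁻¹ * δ⁻¹ * ‖x * q‖ ^ (n + 1) * ‖q‖ ^ c := by
        apply Finset.sum_le_sum
        intro c _
        calc ‖FF q x z n c‖
            ≤ δ⁻¹ * δ⁻¹ * (‖x * q‖ ^ (n + 1) * ‖q‖ ^ (c + 1)) := FF_norm_le hδ hb n c
        _ ≤ δ⁻¹ * δ⁻¹ * (‖x * q‖ ^ (n + 1) * ‖q‖ ^ c) := by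
            have : ‖q‖ ^ (c + 1) ≤ ‖q‖ ^ c :=
              pow_le_pow_of_le_one (norm_nonneg q) hq1'.le (by omega)
            have h0 : (0:ℝ) ≤ ‖x * q‖ ^ (n + 1) := by positivity
            have h1 : (0:ℝ) ≤ δ⁻¹ * δ⁻¹ := by positivity
            exact mul_le_mul_of_nonneg_left (mul_le_mul_of_nonneg_left this h0) h1
        _ = δ⁻¹ * δ⁻¹ * ‖x * q‖ ^ (n + 1) * ‖q‖ ^ c := by ring
    _ = δ⁻¹ * δ⁻¹ * ‖x * q‖ ^ (n + 1) * ∑ c ∈ range (n + 1), ‖q‖ ^ c := by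
        rw [← Finset.mul_sum]
    _ ≤ δ⁻¹ * δ⁻¹ * ‖x * q‖ ^ (n + 1) * (1 - ‖q‖)⁻¹ := by
        apply mul_le_mul_of_nonneg_left hsum_le (by positivity)
    _ = δ⁻¹ * δ⁻¹ * (1 - ‖q‖)⁻¹ * ‖x * q‖ ^ (n + 1) := by ring
  -- summability of the whole fiber-sum sequence and the tail sequence
  have hPsiS : Summable (fun n : ℕ => ∑' c : ℕ, FF q x z n c) := by
    obtain ⟨a, ha⟩ := hFFprod
    exact ⟨a, ha.prod_fiberwise (fun n => (hfib n).hasSum)⟩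
  have htailS : Summable (fun n : ℕ => ∑' j : ℕ, FF q x z n (n + 1 + j)) := by
    have he : (fun n : ℕ => ∑' j : ℕ, FF q x z n (n + 1 + j)) =
        fun n => (∑' c : ℕ, FF q x z n c) - ∑ c ∈ range (n + 1), FF q x z n c := by
      funext n
      rw [hsplit n]
      ring
    rw [he]
    exact hPsiS.sub hfinS
  -- rewrite the left-hand side
  have hL : (∑' n : ℕ, ∑' m : ℕ,
      (-1) ^ (m + 1) * q ^ (2 * (m + 1) * (n + 1) + (m + 1)) * x ^ (n + 1) * z ^ (m + 1) /
        ((1 + z * q ^ (n + 1)) * (1 - q ^ (2 * m + 1)))) =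
      -z * ∑' n : ℕ, ∑' j : ℕ, FF q x z n (n + 1 + j) := by
    rw [tsum_congr (fun n => inner_sum q x z hq1' hzq' hne n), tsum_mul_left]
  -- rewrite the AB product
  have hAB : x * z * q ^ 2 * ((∑' k : ℕ, x ^ k * q ^ k / (1 + z * q ^ (2 * k + 1))) *
      (∑' k : ℕ, x ^ k * q ^ (2 * k) / (1 + z * q ^ (2 * k + 1)))) =
      z * ∑' s : ℕ, ∑ c ∈ range (s + 1), FF q x z s c := by
    rw [tsum_mul_tsum_eq_tsum_sum_antidiagonal_of_summable_norm hA hB,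
      ← tsum_mul_left, ← tsum_mul_left]
    exact tsum_congr fun s => by
      rw [Finset.mul_sum]
      exact finite_id q x z hne s
  -- rewrite the CD product
  have hCD : x * z * q ^ 2 * ((∑' k : ℕ, q ^ k / (1 + z * q ^ (2 * k + 1))) *
      (∑' k : ℕ, x ^ k * q ^ k / (1 + z * q ^ (k + 1)))) =
      z * ∑' n : ℕ, ∑' c : ℕ, FF q x z n c := by
    calc x * z * q ^ 2 * ((∑' k : ℕ, q ^ k / (1 + z * q ^ (2 * k + 1))) *
        (∑' k : ℕ, x ^ k * q ^ k / (1 + z * q ^ (k + 1))))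
        = x * z * q ^ 2 * ∑' p : ℕ × ℕ, (q ^ p.1 / (1 + z * q ^ (2 * p.1 + 1))) *
            (x ^ p.2 * q ^ p.2 / (1 + z * q ^ (p.2 + 1))) := by
          rw [tsum_mul_tsum_of_summable_norm hC hD]
    _ = ∑' p : ℕ × ℕ, x * z * q ^ 2 * ((q ^ p.1 / (1 + z * q ^ (2 * p.1 + 1))) *
            (x ^ p.2 * q ^ p.2 / (1 + z * q ^ (p.2 + 1)))) := by rw [← tsum_mul_left]
    _ = ∑' p : ℕ × ℕ, z * FF q x z p.2 p.1 := by
          apply tsum_congr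
          intro p
          have hd1 := hne (2 * p.1 + 1) (by omega)
          have hd2 := hne (p.2 + 1) (by omega)
          simp only [FF]
          field_simp
          ring
    _ = z * ∑' p : ℕ × ℕ, FF q x z p.2 p.1 := tsum_mul_left
    _ = z * ∑' p : ℕ × ℕ, FF q x z p.1 p.2 := by
          congr 1
          have := (Equiv.prodComm ℕ ℕ).tsum_eq (fun p : ℕ × ℕ => FF q x z p.1 p.2)
          simpa using this
    _ = z * ∑' n : ℕ, ∑' c : ℕ, FF q x z n c := by
          rw [Summable.tsum_prod' hFFprod (fun b => hfib b)]
  rw [hL, mul_assoc (x * z * q ^ 2), mul_assoc (x * z * q ^ 2), hAB, hCD,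
    tsum_congr hsplit, Summable.tsum_add hfinS htailS]
  ring
end

section
/- Let q be a complex number with 0 < |q| < 1, and let x, y, z, w be complex numbers with |y| < 1, |q| < |x| < 1/|y|, w ≠ 0, and such that z q^r ≠ 1, w q^r ≠ 1 and z q^{r+1} ≠ w for every natural number r. Then A(x,y,z,w;q) − (zq/(xw))·A(xy, q/x, zq/w, z; q) = L(xy,z,w;q) + y·L(y, zq/w; q)·L(xy,w;q) − (zq/(xw))·L(q/x, zq/w; q)·L(xy,z;q). -/
open Filter Finset

private lemma aux_bdd {q : ℂ} (u : ℂ) (hq1 : ‖q‖ < 1) :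
    ∃ C : ℝ, 0 ≤ C ∧ ∀ n : ℕ, ‖(1 - u * q ^ n)⁻¹‖ ≤ C := by
  have hten : Tendsto (fun n : ℕ => u * q ^ n) atTop (nhds 0) := by
    simpa using (tendsto_pow_atTop_nhds_zero_of_norm_lt_one hq1).const_mul u
  have h1 : Tendsto (fun n : ℕ => (1 - u * q ^ n)⁻¹) atTop (nhds 1) := by
    have h0 : Tendsto (fun n : ℕ => 1 - u * q ^ n) atTop (nhds 1) := by
      simpa using tendsto_const_nhds.sub hten
    simpa using h0.inv₀ (by norm_num)
  obtain ⟨C, hC⟩ := (h1.norm).bddAbove_range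
  exact ⟨C, le_trans (norm_nonneg _) (hC (Set.mem_range_self 0)),
    fun n => hC (Set.mem_range_self n)⟩

private lemma aux_norm_div {a D1 D2 : ℂ} {C1 C2 : ℝ} (hC1 : 0 ≤ C1)
    (h1 : ‖D1⁻¹‖ ≤ C1) (h2 : ‖D2⁻¹‖ ≤ C2) :
    ‖a / (D1 * D2)‖ ≤ ‖a‖ * C1 * C2 := by
  rw [div_eq_mul_inv, mul_inv, ← mul_assoc, norm_mul, norm_mul]
  gcongr

private lemma aux_summable1 {q u a : ℂ} (hq1 : ‖q‖ < 1) (ha : ‖a‖ < 1) :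
    Summable fun n : ℕ => a ^ n / (1 - u * q ^ n) := by
  obtain ⟨C, hC0, hC⟩ := aux_bdd u hq1
  apply Summable.of_norm_bounded (g := fun n => ‖a‖ ^ n * C)
  · exact (summable_geometric_of_lt_one (norm_nonneg a) ha).mul_right C
  · intro n
    rw [div_eq_mul_inv, norm_mul, norm_pow]
    exact mul_le_mul_of_nonneg_left (hC n) (by positivity)

private lemma aux_summable_prod {F : ℕ → ℕ → ℂ} {C a b : ℝ} (ha0 : 0 ≤ a) (ha : a < 1)
    (hb0 : 0 ≤ b) (hb : b < 1)
    (h : ∀ n k, ‖F n k‖ ≤ C * (a ^ n * b ^ k)) : Summable (Function.uncurry F) := by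
  apply Summable.of_norm_bounded (g := fun p : ℕ × ℕ => C * (a ^ p.1 * b ^ p.2))
  · exact ((summable_geometric_of_lt_one ha0 ha).mul_of_nonneg
      (summable_geometric_of_lt_one hb0 hb) (fun n => by positivity)
      (fun k => by positivity)).mul_left C
  · exact fun p => h p.1 p.2

private lemma aux_summable_row {F : ℕ → ℕ → ℂ} {C a b : ℝ} (ha0 : 0 ≤ a) (ha : a < 1)
    (hb0 : 0 ≤ b) (hb : b < 1)
    (h : ∀ n k, ‖F n k‖ ≤ C * (a ^ n * b ^ k)) :
    Summable (fun n => ∑' k, F n k) := by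
  have hrown : ∀ n, Summable fun k => ‖F n k‖ := by
    intro n
    apply Summable.of_nonneg_of_le (fun k => norm_nonneg _) (fun k => h n k)
    exact ((summable_geometric_of_lt_one hb0 hb).mul_left (a ^ n)).mul_left C
  apply Summable.of_norm_bounded (g := fun n => (C * (1 - b)⁻¹) * a ^ n)
  · exact (summable_geometric_of_lt_one ha0 ha).mul_left _
  · intro n
    calc ‖∑' k, F n k‖ ≤ ∑' k, ‖F n k‖ := norm_tsum_le_tsum_norm (hrown n)
      _ ≤ ∑' k, C * (a ^ n * b ^ k) := by
          apply Summable.tsum_le_tsum (fun k => h n k) (hrown n)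
          exact ((summable_geometric_of_lt_one hb0 hb).mul_left (a ^ n)).mul_left C
      _ = (C * a ^ n) * ∑' k, b ^ k := by
          rw [← tsum_mul_left]; exact tsum_congr fun k => by ring
      _ = (C * (1 - b)⁻¹) * a ^ n := by
          rw [tsum_geometric_of_lt_one hb0 hb]; ring

private lemma pf_generic (A1 A2 A3 a b c d N1 : ℂ) (e1 : A1 ≠ 0) (e2 : A2 ≠ 0) (e3 : A3 ≠ 0)
    (hnum : N1 * A3 = a * b * A2 - c * d * A1) :
    N1 / (A1 * A2) = a / A1 * (b / A3) - c * (d / (A2 * A3)) := by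
  have hN : N1 = (a * b * A2 - c * d * A1) / A3 := by rw [eq_div_iff e3]; exact hnum
  rw [hN]
  field_simp

theorem stmt12 (q x y z w : ℂ) (hq0 : 0 < ‖q‖) (hq1 : ‖q‖ < 1)
    (hy : ‖y‖ < 1) (hxl : ‖q‖ < ‖x‖)
    (hxu : ‖x‖ < 1 / ‖y‖) (hw0 : w ≠ 0)
    (hz' : ∀ r : ℕ, z * q ^ r ≠ 1) (hw' : ∀ r : ℕ, w * q ^ r ≠ 1)
    (hzw : ∀ r : ℕ, z * q ^ (r + 1) ≠ w) :
    doubleLambert x y z w q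
        - (z * q / (x * w)) * doubleLambert (x * y) (q / x) (z * q / w) z q =
      lambert2 (x * y) z w q
        + y * lambert1 y (z * q / w) q * lambert1 (x * y) w q
        - (z * q / (x * w)) * lambert1 (q / x) (z * q / w) q * lambert1 (x * y) z q := by
  classical
  -- basic facts
  have hq1' : ‖q‖ < 1 := by exact hq1
  have hq0' : q ≠ 0 := norm_pos_iff.mp hq0
  have hx0 : x ≠ 0 := norm_pos_iff.mp (lt_trans hq0 hxl)
  have hy0 : y ≠ 0 := by
    intro h
    rw [h] at hxu
    simp at hxu
    exact absurd hxu (not_lt.mpr (norm_nonneg x))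
  have hy' : ‖y‖ < 1 := by exact hy
  have hypos : 0 < ‖y‖ := norm_pos_iff.mpr hy0
  have hxy' : ‖x‖ * ‖y‖ < 1 := by
    exact (lt_div_iff₀ hypos).mp hxu
  have hxy : ‖x * y‖ < 1 := by rw [norm_mul]; exact hxy'
  have hqx : ‖q / x‖ < 1 := by
    rw [norm_div]
    exact (div_lt_one (lt_trans hq0 hxl)).mpr hxl
  have hb2 : ‖x * y‖ * ‖q / x‖ < 1 := by
    nlinarith [norm_nonneg (x * y), norm_nonneg (q / x)]
  -- nonzero denominators
  have hdz : ∀ m : ℕ, (1 - z * q ^ m) ≠ 0 := fun m => sub_ne_zero.mpr (Ne.symm (hz' m))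
  have hdw : ∀ n : ℕ, (1 - w * q ^ n) ≠ 0 := fun n => sub_ne_zero.mpr (Ne.symm (hw' n))
  have hdv : ∀ k : ℕ, (1 - (z * q / w) * q ^ k) ≠ 0 := by
    intro k h
    apply hzw k
    have h1 : (z * q / w) * q ^ k = 1 := (sub_eq_zero.mp h).symm
    field_simp at h1
    rw [pow_succ]
    linear_combination h1
  -- bounds
  obtain ⟨Cw, hCw0, hCw⟩ := aux_bdd w hq1'
  obtain ⟨Cz, hCz0, hCz⟩ := aux_bdd z hq1'
  obtain ⟨Cv, hCv0, hCv⟩ := aux_bdd (z * q / w) hq1'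
  have hfb : ∀ n j : ℕ,
      ‖x ^ n * y ^ (n + j) / ((1 - w * q ^ n) * (1 - z * q ^ (n + j)))‖
        ≤ (Cw * Cz) * ((‖x‖ * ‖y‖) ^ n * ‖y‖ ^ j) := by
    intro n j
    calc ‖x ^ n * y ^ (n + j) / ((1 - w * q ^ n) * (1 - z * q ^ (n + j)))‖
        ≤ ‖x ^ n * y ^ (n + j)‖ * Cw * Cz := aux_norm_div hCw0 (hCw n) (hCz (n + j))
      _ = (Cw * Cz) * ((‖x‖ * ‖y‖) ^ n * ‖y‖ ^ j) := by
          rw [norm_mul, norm_pow, norm_pow, pow_add, mul_pow]; ring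
  have hFb : ∀ n m : ℕ,
      ‖(x * y) ^ n * (q / x) ^ m / ((1 - z * q ^ n) * (1 - (z * q / w) * q ^ m))‖
        ≤ (Cz * Cv) * (‖x * y‖ ^ n * ‖q / x‖ ^ m) := by
    intro n m
    calc ‖(x * y) ^ n * (q / x) ^ m / ((1 - z * q ^ n) * (1 - (z * q / w) * q ^ m))‖
        ≤ ‖(x * y) ^ n * (q / x) ^ m‖ * Cz * Cv := aux_norm_div hCz0 (hCz n) (hCv m)
      _ = (Cz * Cv) * (‖x * y‖ ^ n * ‖q / x‖ ^ m) := by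
          rw [norm_mul, norm_pow, norm_pow]; ring
  have hHb : ∀ n k : ℕ,
      ‖(x * y) ^ (k + 1 + n) * (q / x) ^ k /
          ((1 - z * q ^ (k + 1 + n)) * (1 - (z * q / w) * q ^ k))‖
        ≤ (Cz * Cv * ‖x * y‖) * (‖x * y‖ ^ n * (‖x * y‖ * ‖q / x‖) ^ k) := by
    intro n k
    calc ‖(x * y) ^ (k + 1 + n) * (q / x) ^ k /
          ((1 - z * q ^ (k + 1 + n)) * (1 - (z * q / w) * q ^ k))‖
        ≤ ‖(x * y) ^ (k + 1 + n) * (q / x) ^ k‖ * Cz * Cv :=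
          aux_norm_div hCz0 (hCz (k + 1 + n)) (hCv k)
      _ = (Cz * Cv * ‖x * y‖) * (‖x * y‖ ^ n * (‖x * y‖ * ‖q / x‖) ^ k) := by
          rw [norm_mul, norm_pow, norm_pow, pow_add, pow_succ, mul_pow]; ring
  -- summability packages
  have hfU : Summable (Function.uncurry (fun n j =>
      x ^ n * y ^ (n + j) / ((1 - w * q ^ n) * (1 - z * q ^ (n + j))))) :=
    aux_summable_prod (by positivity) hxy' (norm_nonneg y) hy' hfb
  have hfn : ∀ n : ℕ, Summable (fun j =>
      x ^ n * y ^ (n + j) / ((1 - w * q ^ n) * (1 - z * q ^ (n + j)))) := fun n =>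
    hfU.comp_injective (i := fun j => (n, j)) (fun a b hab => by simpa using hab)
  have hFU : Summable (Function.uncurry (fun n m =>
      (x * y) ^ n * (q / x) ^ m / ((1 - z * q ^ n) * (1 - (z * q / w) * q ^ m)))) :=
    aux_summable_prod (norm_nonneg _) hxy (norm_nonneg _) hqx hFb
  have hFcol : ∀ m : ℕ, Summable (fun n =>
      (x * y) ^ n * (q / x) ^ m / ((1 - z * q ^ n) * (1 - (z * q / w) * q ^ m))) := fun m =>
    hFU.comp_injective (i := fun n => (n, m)) (fun a b hab => by simpa using hab)
  have hHU : Summable (Function.uncurry (fun n k =>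
      (x * y) ^ (k + 1 + n) * (q / x) ^ k /
        ((1 - z * q ^ (k + 1 + n)) * (1 - (z * q / w) * q ^ k)))) :=
    aux_summable_prod (norm_nonneg _) hxy (by positivity) hb2 hHb
  have hHn : ∀ n : ℕ, Summable (fun k =>
      (x * y) ^ (k + 1 + n) * (q / x) ^ k /
        ((1 - z * q ^ (k + 1 + n)) * (1 - (z * q / w) * q ^ k))) := fun n =>
    hHU.comp_injective (i := fun k => (n, k)) (fun a b hab => by simpa using hab)
  have hHk : ∀ k : ℕ, Summable (fun n =>
      (x * y) ^ (k + 1 + n) * (q / x) ^ k /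
        ((1 - z * q ^ (k + 1 + n)) * (1 - (z * q / w) * q ^ k))) := fun k =>
    hHU.comp_injective (i := fun n => (n, k)) (fun a b hab => by simpa using hab)
  have hHrow : Summable (fun n => ∑' k : ℕ,
      (x * y) ^ (k + 1 + n) * (q / x) ^ k /
        ((1 - z * q ^ (k + 1 + n)) * (1 - (z * q / w) * q ^ k))) :=
    aux_summable_row (norm_nonneg _) hxy (by positivity) hb2 hHb
  -- Part 1: partial fractions
  have key1 : ∀ n k : ℕ,
      x ^ n * y ^ (n + (k + 1)) / ((1 - w * q ^ n) * (1 - z * q ^ (n + (k + 1))))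
        = (x * y) ^ n / (1 - w * q ^ n) * (y ^ (k + 1) / (1 - (z * q / w) * q ^ k))
          - (z * q / (x * w)) * ((x * y) ^ (k + 1 + n) * (q / x) ^ k /
              ((1 - z * q ^ (k + 1 + n)) * (1 - (z * q / w) * q ^ k))) := by
    intro n k
    have hE : k + 1 + n = n + (k + 1) := by omega
    rw [hE]
    apply pf_generic _ _ _ _ _ _ _ _ (hdw n) (hdz (n + (k + 1))) (hdv k)
    rw [div_pow]
    field_simp
    ring
  have hSy1 : Summable (fun k : ℕ => y ^ (k + 1) / (1 - (z * q / w) * q ^ k)) := by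
    have h := (aux_summable1 (u := z * q / w) (a := y) hq1' hy').mul_left y
    refine h.congr fun k => ?_
    ring
  have htsy : (∑' k : ℕ, y ^ (k + 1) / (1 - (z * q / w) * q ^ k))
      = y * lambert1 y (z * q / w) q := by
    rw [lambert1, ← tsum_mul_left]
    exact tsum_congr fun k => by ring
  have inner : ∀ n : ℕ,
      (∑' j : ℕ, x ^ n * y ^ (n + j) / ((1 - w * q ^ n) * (1 - z * q ^ (n + j))))
        = x ^ n * y ^ (n + 0) / ((1 - w * q ^ n) * (1 - z * q ^ (n + 0)))
          + ((x * y) ^ n / (1 - w * q ^ n) * (y * lambert1 y (z * q / w) q)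
             - (z * q / (x * w)) * ∑' k : ℕ, (x * y) ^ (k + 1 + n) * (q / x) ^ k /
                 ((1 - z * q ^ (k + 1 + n)) * (1 - (z * q / w) * q ^ k))) := by
    intro n
    rw [(hfn n).tsum_eq_zero_add]
    congr 1
    calc (∑' k : ℕ, x ^ n * y ^ (n + (k + 1)) / ((1 - w * q ^ n) * (1 - z * q ^ (n + (k + 1)))))
        = ∑' k : ℕ, ((x * y) ^ n / (1 - w * q ^ n) * (y ^ (k + 1) / (1 - (z * q / w) * q ^ k))
            - (z * q / (x * w)) * ((x * y) ^ (k + 1 + n) * (q / x) ^ k /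
                ((1 - z * q ^ (k + 1 + n)) * (1 - (z * q / w) * q ^ k)))) :=
          tsum_congr fun k => key1 n k
      _ = _ := by
          rw [Summable.tsum_sub (hSy1.mul_left _) ((hHn n).mul_left _), tsum_mul_left, tsum_mul_left,
            htsy]
  have P1 : doubleLambert x y z w q
      = lambert2 (x * y) z w q + lambert1 (x * y) w q * (y * lambert1 y (z * q / w) q)
        - (z * q / (x * w)) * ∑' n : ℕ, ∑' k : ℕ, (x * y) ^ (k + 1 + n) * (q / x) ^ k /
            ((1 - z * q ^ (k + 1 + n)) * (1 - (z * q / w) * q ^ k)) := by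
    rw [doubleLambert, tsum_congr inner]
    have Sa : Summable (fun n : ℕ =>
        x ^ n * y ^ (n + 0) / ((1 - w * q ^ n) * (1 - z * q ^ (n + 0)))) :=
      hfU.comp_injective (i := fun n => (n, 0)) (fun a b hab => by simpa using hab)
    have Sb : Summable (fun n : ℕ =>
        (x * y) ^ n / (1 - w * q ^ n) * (y * lambert1 y (z * q / w) q)) :=
      (aux_summable1 hq1' hxy).mul_right _
    rw [Summable.tsum_add Sa (Sb.sub (hHrow.mul_left _)), Summable.tsum_sub Sb (hHrow.mul_left _),
      tsum_mul_left, tsum_mul_right]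
    have hL2 : (∑' n : ℕ, x ^ n * y ^ (n + 0) / ((1 - w * q ^ n) * (1 - z * q ^ (n + 0))))
        = lambert2 (x * y) z w q := by
      rw [lambert2]; exact tsum_congr fun n => by ring
    have hLw : (∑' n : ℕ, (x * y) ^ n / (1 - w * q ^ n)) = lambert1 (x * y) w q := by
      rw [lambert1]
    rw [hL2, hLw]
    ring
  -- Part 2: the remainder T
  have key2 : ∀ k : ℕ,
      (∑' n : ℕ, (x * y) ^ (k + 1 + n) * (q / x) ^ k /
          ((1 - z * q ^ (k + 1 + n)) * (1 - (z * q / w) * q ^ k)))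
        = (∑' n : ℕ, (x * y) ^ n * (q / x) ^ k /
            ((1 - z * q ^ n) * (1 - (z * q / w) * q ^ k)))
          - ∑ i ∈ Finset.range (k + 1), (x * y) ^ i * (q / x) ^ k /
              ((1 - z * q ^ i) * (1 - (z * q / w) * q ^ k)) := by
    intro k
    have h := Summable.sum_add_tsum_nat_add (f := fun n => (x * y) ^ n * (q / x) ^ k /
        ((1 - z * q ^ n) * (1 - (z * q / w) * q ^ k))) (k + 1) (hFcol k)
    have h2 : (∑' n : ℕ, (x * y) ^ (n + (k + 1)) * (q / x) ^ k /
        ((1 - z * q ^ (n + (k + 1))) * (1 - (z * q / w) * q ^ k)))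
        = ∑' n : ℕ, (x * y) ^ (k + 1 + n) * (q / x) ^ k /
            ((1 - z * q ^ (k + 1 + n)) * (1 - (z * q / w) * q ^ k)) :=
      tsum_congr fun n => by rw [Nat.add_comm n (k + 1)]
    rw [← h2]
    exact eq_sub_of_add_eq' h
  have swapH : (∑' n : ℕ, ∑' k : ℕ, (x * y) ^ (k + 1 + n) * (q / x) ^ k /
        ((1 - z * q ^ (k + 1 + n)) * (1 - (z * q / w) * q ^ k)))
      = ∑' k : ℕ, ∑' n : ℕ, (x * y) ^ (k + 1 + n) * (q / x) ^ k /
          ((1 - z * q ^ (k + 1 + n)) * (1 - (z * q / w) * q ^ k)) :=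
    (Summable.tsum_comm' hHU hHn hHk).symm
  have hFk : ∀ k : ℕ, (∑' n : ℕ, (x * y) ^ n * (q / x) ^ k /
        ((1 - z * q ^ n) * (1 - (z * q / w) * q ^ k)))
      = lambert1 (x * y) z q * ((q / x) ^ k / (1 - (z * q / w) * q ^ k)) := by
    intro k
    calc (∑' n : ℕ, (x * y) ^ n * (q / x) ^ k / ((1 - z * q ^ n) * (1 - (z * q / w) * q ^ k)))
        = ∑' n : ℕ, ((x * y) ^ n / (1 - z * q ^ n)) * ((q / x) ^ k / (1 - (z * q / w) * q ^ k)) :=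
          tsum_congr fun n => (div_mul_div_comm _ _ _ _).symm
      _ = lambert1 (x * y) z q * ((q / x) ^ k / (1 - (z * q / w) * q ^ k)) := by
          rw [tsum_mul_right, lambert1]
  have hgrid : (∑' k : ℕ, ∑' n : ℕ, (x * y) ^ n * (q / x) ^ k /
        ((1 - z * q ^ n) * (1 - (z * q / w) * q ^ k)))
      = lambert1 (x * y) z q * lambert1 (q / x) (z * q / w) q := by
    rw [tsum_congr hFk, tsum_mul_left]
    unfold lambert1
    rfl
  have hFb' : ∀ k n : ℕ,
      ‖(x * y) ^ n * (q / x) ^ k / ((1 - z * q ^ n) * (1 - (z * q / w) * q ^ k))‖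
        ≤ (Cz * Cv) * (‖q / x‖ ^ k * ‖x * y‖ ^ n) := by
    intro k n
    calc ‖(x * y) ^ n * (q / x) ^ k / ((1 - z * q ^ n) * (1 - (z * q / w) * q ^ k))‖
        ≤ (Cz * Cv) * (‖x * y‖ ^ n * ‖q / x‖ ^ k) := hFb n k
      _ = (Cz * Cv) * (‖q / x‖ ^ k * ‖x * y‖ ^ n) := by ring
  have SK1 : Summable (fun k : ℕ => ∑' n : ℕ, (x * y) ^ n * (q / x) ^ k /
      ((1 - z * q ^ n) * (1 - (z * q / w) * q ^ k))) :=
    aux_summable_row (norm_nonneg _) hqx (norm_nonneg _) hxy hFb'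
  have SK2 : Summable (fun k : ℕ => ∑ i ∈ Finset.range (k + 1),
      (x * y) ^ i * (q / x) ^ k / ((1 - z * q ^ i) * (1 - (z * q / w) * q ^ k))) := by
    apply Summable.of_norm_bounded (g := fun k => ((Cz * Cv) * (1 - ‖x * y‖)⁻¹) * ‖q / x‖ ^ k)
    · exact (summable_geometric_of_lt_one (norm_nonneg _) hqx).mul_left _
    · intro k
      calc ‖∑ i ∈ Finset.range (k + 1),
            (x * y) ^ i * (q / x) ^ k / ((1 - z * q ^ i) * (1 - (z * q / w) * q ^ k))‖
          ≤ ∑ i ∈ Finset.range (k + 1),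
            ‖(x * y) ^ i * (q / x) ^ k / ((1 - z * q ^ i) * (1 - (z * q / w) * q ^ k))‖ :=
            norm_sum_le _ _
        _ ≤ ∑ i ∈ Finset.range (k + 1), (Cz * Cv) * (‖x * y‖ ^ i * ‖q / x‖ ^ k) :=
            Finset.sum_le_sum fun i _ => hFb i k
        _ = ((Cz * Cv) * ‖q / x‖ ^ k) * ∑ i ∈ Finset.range (k + 1), ‖x * y‖ ^ i := by
            rw [Finset.mul_sum]; exact Finset.sum_congr rfl fun i _ => by ring
        _ ≤ ((Cz * Cv) * ‖q / x‖ ^ k) * (1 - ‖x * y‖)⁻¹ := by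
            apply mul_le_mul_of_nonneg_left _ (by positivity)
            rw [← tsum_geometric_of_lt_one (norm_nonneg _) hxy]
            exact Summable.sum_le_tsum _ (fun i _ => by positivity)
              (summable_geometric_of_lt_one (norm_nonneg _) hxy)
        _ = ((Cz * Cv) * (1 - ‖x * y‖)⁻¹) * ‖q / x‖ ^ k := by ring
  -- the triangular rearrangement
  have hindb : ∀ i k : ℕ,
      ‖(if i ≤ k then (x * y) ^ i * (q / x) ^ k /
          ((1 - z * q ^ i) * (1 - (z * q / w) * q ^ k)) else 0)‖
        ≤ (Cz * Cv) * (‖x * y‖ ^ i * ‖q / x‖ ^ k) := by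
    intro i k
    by_cases h : i ≤ k
    · rw [if_pos h]; exact hFb i k
    · rw [if_neg h]
      simp only [norm_zero]
      positivity
  have hindU : Summable (Function.uncurry (fun i k =>
      if i ≤ k then (x * y) ^ i * (q / x) ^ k /
        ((1 - z * q ^ i) * (1 - (z * q / w) * q ^ k)) else 0)) :=
    aux_summable_prod (norm_nonneg _) hxy (norm_nonneg _) hqx hindb
  have hindrow : ∀ i : ℕ, Summable (fun k => if i ≤ k then (x * y) ^ i * (q / x) ^ k /
      ((1 - z * q ^ i) * (1 - (z * q / w) * q ^ k)) else 0) := fun i =>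
    hindU.comp_injective (i := fun k => (i, k)) (fun a b hab => by simpa using hab)
  have hindcol : ∀ k : ℕ, Summable (fun i => if i ≤ k then (x * y) ^ i * (q / x) ^ k /
      ((1 - z * q ^ i) * (1 - (z * q / w) * q ^ k)) else 0) := fun k =>
    hindU.comp_injective (i := fun i => (i, k)) (fun a b hab => by simpa using hab)
  have step1 : ∀ k : ℕ, (∑ i ∈ Finset.range (k + 1),
      (x * y) ^ i * (q / x) ^ k / ((1 - z * q ^ i) * (1 - (z * q / w) * q ^ k)))
      = ∑' i : ℕ, (if i ≤ k then (x * y) ^ i * (q / x) ^ k /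
          ((1 - z * q ^ i) * (1 - (z * q / w) * q ^ k)) else 0) := by
    intro k
    calc (∑ i ∈ Finset.range (k + 1),
        (x * y) ^ i * (q / x) ^ k / ((1 - z * q ^ i) * (1 - (z * q / w) * q ^ k)))
        = ∑ i ∈ Finset.range (k + 1), (if i ≤ k then (x * y) ^ i * (q / x) ^ k /
            ((1 - z * q ^ i) * (1 - (z * q / w) * q ^ k)) else 0) :=
          Finset.sum_congr rfl fun i hi => (if_pos (by simp at hi; omega)).symm
      _ = ∑' i : ℕ, (if i ≤ k then (x * y) ^ i * (q / x) ^ k /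
            ((1 - z * q ^ i) * (1 - (z * q / w) * q ^ k)) else 0) :=
          (tsum_eq_sum fun i hi => if_neg (by simp at hi; omega)).symm
  have step2 : (∑' k : ℕ, ∑' i : ℕ, (if i ≤ k then (x * y) ^ i * (q / x) ^ k /
        ((1 - z * q ^ i) * (1 - (z * q / w) * q ^ k)) else 0))
      = ∑' i : ℕ, ∑' k : ℕ, (if i ≤ k then (x * y) ^ i * (q / x) ^ k /
          ((1 - z * q ^ i) * (1 - (z * q / w) * q ^ k)) else 0) :=
    Summable.tsum_comm' hindU hindrow hindcol
  have step3 : ∀ i : ℕ, (∑' k : ℕ, (if i ≤ k then (x * y) ^ i * (q / x) ^ k /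
        ((1 - z * q ^ i) * (1 - (z * q / w) * q ^ k)) else 0))
      = ∑' j : ℕ, (x * y) ^ i * (q / x) ^ (i + j) /
          ((1 - z * q ^ i) * (1 - (z * q / w) * q ^ (i + j))) := by
    intro i
    have h := Summable.sum_add_tsum_nat_add (f := fun k => if i ≤ k then (x * y) ^ i * (q / x) ^ k /
        ((1 - z * q ^ i) * (1 - (z * q / w) * q ^ k)) else 0) i (hindrow i)
    have hz0 : (∑ k ∈ Finset.range i, if i ≤ k then (x * y) ^ i * (q / x) ^ k /
        ((1 - z * q ^ i) * (1 - (z * q / w) * q ^ k)) else 0) = 0 :=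
      Finset.sum_eq_zero fun k hk => if_neg (by simp at hk; omega)
    rw [← h, hz0, zero_add]
    refine tsum_congr fun j => ?_
    have hij : i ≤ j + i := by omega
    beta_reduce
    rw [if_pos hij, Nat.add_comm j i]
  have triangle : (∑' k : ℕ, ∑ i ∈ Finset.range (k + 1),
      (x * y) ^ i * (q / x) ^ k / ((1 - z * q ^ i) * (1 - (z * q / w) * q ^ k)))
      = doubleLambert (x * y) (q / x) (z * q / w) z q := by
    rw [tsum_congr step1, step2, tsum_congr step3, doubleLambert]
  have P2 : (∑' n : ℕ, ∑' k : ℕ, (x * y) ^ (k + 1 + n) * (q / x) ^ k /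
        ((1 - z * q ^ (k + 1 + n)) * (1 - (z * q / w) * q ^ k)))
      = lambert1 (x * y) z q * lambert1 (q / x) (z * q / w) q
        - doubleLambert (x * y) (q / x) (z * q / w) z q := by
    rw [swapH, tsum_congr key2, Summable.tsum_sub SK1 SK2, hgrid, triangle]
  rw [P1, P2]
  ring
end

section
/- Let q be a complex number with 0 < |q| < 1, and let x, z be complex numbers with |x| > |q| and |zq| < 1. Then Σ_{n=0}^∞ Σ_{m=n}^∞ ( z x^{n−m} q^{m+1} / ((1 − z q^{m+1})(1 − z q^{n+1})) − z x^{−m−1} q^{n+m+2} / ((1 − q^{m+1})(1 − z q^{n+1})) ) = Σ_{n=1}^∞ (Σ_{d | n} d z^d) q^n. -/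
open Complex Finset

namespace S13

noncomputable section

/-- index (n, j, i, k) -/
abbrev T := ℕ × ℕ × ℕ × ℕ

def P (q y z : ℂ) (t : T) : ℂ :=
  z ^ (t.2.2.1 + t.2.2.2 + 1) * y ^ t.2.1 *
    q ^ ((t.1 + t.2.1 + 1) * (t.2.2.2 + 1) + (t.1 + 1) * t.2.2.1)

def N (q y z : ℂ) (t : T) : ℂ :=
  z ^ (t.2.2.1 + 1) * y ^ (t.1 + t.2.1 + 1) *
    q ^ ((t.1 + t.2.1 + 1) * (t.2.2.2 + 1) + (t.1 + 1) * (t.2.2.1 + 1))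

def Q (q y z : ℂ) (t : T) : ℂ := P q y z (t.1, t.2.1 + 1, t.2.2)

def e : T ≃ T where
  toFun t :=
    (t.1 + (t.1 + t.2.1 + 1) * (t.2.2.2 / (t.2.2.1 + 1)), t.1 + t.2.1,
      t.2.2.1 - t.2.2.2 % (t.2.2.1 + 1), t.2.2.2 % (t.2.2.1 + 1))
  invFun t :=
    (t.1 % (t.2.1 + 1), t.2.1 - t.1 % (t.2.1 + 1), t.2.2.1 + t.2.2.2,
      (t.2.2.1 + t.2.2.2 + 1) * (t.1 / (t.2.1 + 1)) + t.2.2.2)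
  left_inv := by
    rintro ⟨n, j, i, k⟩
    obtain ⟨γ, δ, h2, rfl⟩ : ∃ γ δ, δ < i + 1 ∧ k = (i + 1) * γ + δ :=
      ⟨k / (i + 1), k % (i + 1), Nat.mod_lt _ (Nat.succ_pos i), (Nat.div_add_mod k (i + 1)).symm⟩
    have hA : ((i + 1) * γ + δ) / (i + 1) = γ := by
      rw [Nat.mul_add_div (Nat.succ_pos i), Nat.div_eq_of_lt h2]; omega
    have hB : ((i + 1) * γ + δ) % (i + 1) = δ := by
      rw [Nat.mul_add_mod, Nat.mod_eq_of_lt h2]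
    simp only [Prod.mk.injEq, hA, hB]
    have hC : (n + (n + j + 1) * γ) % (n + j + 1) = n := by
      rw [Nat.add_mul_mod_self_left, Nat.mod_eq_of_lt (by omega)]
    have hD : (n + (n + j + 1) * γ) / (n + j + 1) = γ := by
      rw [Nat.add_mul_div_left _ _ (by omega : 0 < n + j + 1), Nat.div_eq_of_lt (by omega)]; omega
    rw [hC, hD]
    have hid : i - δ + δ = i := by omega
    rw [hid]
    exact ⟨rfl, by omega, rfl, rfl⟩
  right_inv := by
    rintro ⟨n, j, i, k⟩
    obtain ⟨α, β, h2, rfl⟩ : ∃ α β, β < j + 1 ∧ n = (j + 1) * α + β :=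
      ⟨n / (j + 1), n % (j + 1), Nat.mod_lt _ (Nat.succ_pos j), (Nat.div_add_mod n (j + 1)).symm⟩
    have hA : ((j + 1) * α + β) / (j + 1) = α := by
      rw [Nat.mul_add_div (Nat.succ_pos j), Nat.div_eq_of_lt h2]; omega
    have hB : ((j + 1) * α + β) % (j + 1) = β := by
      rw [Nat.mul_add_mod, Nat.mod_eq_of_lt h2]
    simp only [Prod.mk.injEq, hA, hB]
    have hj : β + (j - β) + 1 = j + 1 := by omega
    rw [hj]
    have hD : ((i + k + 1) * α + k) / (i + k + 1) = α := by
      rw [Nat.mul_add_div (by omega : 0 < i + k + 1), Nat.div_eq_of_lt (by omega)]; omega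
    have hM : ((i + k + 1) * α + k) % (i + k + 1) = k := by
      rw [Nat.mul_add_mod, Nat.mod_eq_of_lt (by omega)]
    rw [hD, hM]
    exact ⟨by omega, by omega, by omega, rfl⟩

lemma N_eq_Q_comp_e (q y z : ℂ) (t : T) : N q y z t = Q q y z (e t) := by
  obtain ⟨n, j, i, k⟩ := t
  obtain ⟨γ, δ, h2, rfl⟩ : ∃ γ δ, δ < i + 1 ∧ k = (i + 1) * γ + δ :=
    ⟨k / (i + 1), k % (i + 1), Nat.mod_lt _ (Nat.succ_pos i), (Nat.div_add_mod k (i + 1)).symm⟩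
  obtain ⟨m, rfl⟩ : ∃ m, i = δ + m := ⟨i - δ, by omega⟩
  have hA : ((δ + m + 1) * γ + δ) / (δ + m + 1) = γ := by
    rw [Nat.mul_add_div (by omega : 0 < δ + m + 1), Nat.div_eq_of_lt (by omega)]; omega
  have hB : ((δ + m + 1) * γ + δ) % (δ + m + 1) = δ := by
    rw [Nat.mul_add_mod, Nat.mod_eq_of_lt (by omega)]
  simp only [N, Q, P, e, Equiv.coe_fn_mk]
  rw [hA, hB]
  have h3 : δ + m - δ = m := by omega
  rw [h3]
  ring

lemma summable4 {a b c d : ℝ} (ha0 : 0 ≤ a) (ha : a < 1) (hb0 : 0 ≤ b) (hb : b < 1)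
    (hc0 : 0 ≤ c) (hc : c < 1) (hd0 : 0 ≤ d) (hd : d < 1) :
    Summable (fun t : T => a ^ t.1 * (b ^ t.2.1 * (c ^ t.2.2.1 * d ^ t.2.2.2))) := by
  have h4 : Summable (fun t : ℕ × ℕ => c ^ t.1 * d ^ t.2) :=
    (summable_geometric_of_lt_one hc0 hc).mul_of_nonneg (summable_geometric_of_lt_one hd0 hd)
      (fun i => pow_nonneg hc0 i) (fun k => pow_nonneg hd0 k)
  have h3 : Summable (fun t : ℕ × ℕ × ℕ => b ^ t.1 * (c ^ t.2.1 * d ^ t.2.2)) := by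
    have := (summable_geometric_of_lt_one hb0 hb).mul_of_nonneg h4 (fun j => pow_nonneg hb0 j)
      (fun t => mul_nonneg (pow_nonneg hc0 _) (pow_nonneg hd0 _))
    exact this.congr (fun t => rfl)
  have := (summable_geometric_of_lt_one ha0 ha).mul_of_nonneg h3 (fun n => pow_nonneg ha0 n)
    (fun t => mul_nonneg (pow_nonneg hb0 _) (mul_nonneg (pow_nonneg hc0 _) (pow_nonneg hd0 _)))
  exact this.congr (fun t => rfl)

section Main

variable {q y z : ℂ} (hq : ‖q‖ < 1) (hy : ‖y * q‖ < 1) (hz : ‖z * q‖ < 1)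

include hq hy hz in
lemma summable_P : Summable (P q y z) := by
  apply Summable.of_norm_bounded (g :=
    fun t : T => ‖z * q‖ * (‖q‖ ^ t.1 * (‖y * q‖ ^ t.2.1 * (‖z * q‖ ^ t.2.2.1 * ‖z * q‖ ^ t.2.2.2))))
    ((summable4 (norm_nonneg q) hq (norm_nonneg _) hy (norm_nonneg _) hz (norm_nonneg _) hz).mul_left _)
  rintro ⟨n, j, i, k⟩
  have hE : i + k + 1 + j + n ≤ (n + j + 1) * (k + 1) + (n + 1) * i := by
    have e1 : (n + j + 1) * (k + 1) + (n + 1) * i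
        = (i + k + 1 + j + n) + ((n + j) * k + n * i) := by ring
    omega
  calc ‖P q y z (n, j, i, k)‖
      = ‖z‖ ^ (i + k + 1) * ‖y‖ ^ j * ‖q‖ ^ ((n + j + 1) * (k + 1) + (n + 1) * i) := by
        simp [P, norm_mul, norm_pow]
    _ ≤ ‖z‖ ^ (i + k + 1) * ‖y‖ ^ j * ‖q‖ ^ (i + k + 1 + j + n) := by
        exact mul_le_mul_of_nonneg_left
          (pow_le_pow_of_le_one (norm_nonneg q) hq.le hE) (by positivity)
    _ = ‖z * q‖ * (‖q‖ ^ n * (‖y * q‖ ^ j * (‖z * q‖ ^ i * ‖z * q‖ ^ k))) := by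
        rw [norm_mul, norm_mul]; ring

include hq hy hz in
lemma summable_N : Summable (N q y z) := by
  apply Summable.of_norm_bounded (g :=
    fun t : T => (‖z * q‖ * ‖y * q‖) *
      (‖y * q‖ ^ t.1 * (‖y * q‖ ^ t.2.1 * (‖z * q‖ ^ t.2.2.1 * ‖q‖ ^ t.2.2.2))))
    ((summable4 (norm_nonneg _) hy (norm_nonneg _) hy (norm_nonneg _) hz (norm_nonneg q) hq).mul_left _)
  rintro ⟨n, j, i, k⟩
  have hE : (i + 1) + k + (n + j + 1) ≤ (n + j + 1) * (k + 1) + (n + 1) * (i + 1) := by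
    have e1 : (n + j + 1) * (k + 1) + (n + 1) * (i + 1)
        = ((i + 1) + k + (n + j + 1)) + ((n + j) * k + n * (i + 1)) := by ring
    omega
  calc ‖N q y z (n, j, i, k)‖
      = ‖z‖ ^ (i + 1) * ‖y‖ ^ (n + j + 1) * ‖q‖ ^ ((n + j + 1) * (k + 1) + (n + 1) * (i + 1)) := by
        simp [N, norm_mul, norm_pow]
    _ ≤ ‖z‖ ^ (i + 1) * ‖y‖ ^ (n + j + 1) * ‖q‖ ^ ((i + 1) + k + (n + j + 1)) := by
        exact mul_le_mul_of_nonneg_left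
          (pow_le_pow_of_le_one (norm_nonneg q) hq.le hE) (by positivity)
    _ = (‖z * q‖ * ‖y * q‖) * (‖y * q‖ ^ n * (‖y * q‖ ^ j * (‖z * q‖ ^ i * ‖q‖ ^ k))) := by
        rw [norm_mul, norm_mul]; ring

include hq hy hz in
lemma summable_Q : Summable (Q q y z) := by
  have hinj : Function.Injective (fun t : T => ((t.1, t.2.1 + 1, t.2.2) : T)) := by
    rintro ⟨a, b, c, d⟩ ⟨a', b', c', d'⟩ h
    simp only [Prod.mk.injEq] at h ⊢
    exact ⟨h.1, by omega, h.2.2⟩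
  exact ((summable_P hq hy hz).comp_injective hinj).congr (fun t => rfl)

include hq hz in
lemma norm_zq_pow (m : ℕ) : ‖z * q ^ (m + 1)‖ < 1 := by
  have : z * q ^ (m + 1) = (z * q) * q ^ m := by ring
  rw [this, norm_mul]
  calc ‖z * q‖ * ‖q ^ m‖ ≤ ‖z * q‖ * 1 := by
        apply mul_le_mul_of_nonneg_left _ (norm_nonneg _)
        rw [norm_pow]; exact pow_le_one₀ (norm_nonneg q) hq.le
    _ < 1 := by rw [mul_one]; exact hz

include hq in
lemma norm_q_pow (m : ℕ) : ‖(q : ℂ) ^ (m + 1)‖ < 1 := by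
  rw [norm_pow]
  exact pow_lt_one₀ (norm_nonneg q) hq (Nat.succ_ne_zero m)

include hq hz in
lemma summable_norm_geo (m : ℕ) : Summable (fun i : ℕ => ‖(z * q ^ (m + 1)) ^ i‖) := by
  have := summable_geometric_of_lt_one (norm_nonneg (z * q ^ (m + 1))) (norm_zq_pow hq hz m)
  exact this.congr (fun i => (norm_pow _ i).symm)

include hq in
lemma summable_norm_geo' (m : ℕ) : Summable (fun i : ℕ => ‖((q : ℂ) ^ (m + 1)) ^ i‖) := by
  have := summable_geometric_of_lt_one (norm_nonneg ((q : ℂ) ^ (m + 1))) (norm_q_pow hq m)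
  exact this.congr (fun i => (norm_pow _ i).symm)

include hq hz in
lemma inner_eq (n j : ℕ) :
    z * y ^ j * q ^ (n + j + 1) / ((1 - z * q ^ (n + j + 1)) * (1 - z * q ^ (n + 1)))
      - z * y ^ (n + j + 1) * q ^ (n + (n + j) + 2) /
        ((1 - q ^ (n + j + 1)) * (1 - z * q ^ (n + 1)))
    = ∑' ik : ℕ × ℕ, (P q y z (n, j, ik.1, ik.2) - N q y z (n, j, ik.1, ik.2)) := by
  have g1 : ∑' i : ℕ, (z * q ^ (n + 1)) ^ i = (1 - z * q ^ (n + 1))⁻¹ :=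
    tsum_geometric_of_norm_lt_one (norm_zq_pow hq hz n)
  have g2 : ∑' k : ℕ, (z * q ^ (n + j + 1)) ^ k = (1 - z * q ^ (n + j + 1))⁻¹ :=
    tsum_geometric_of_norm_lt_one (norm_zq_pow hq hz (n + j))
  have g3 : ∑' k : ℕ, ((q : ℂ) ^ (n + j + 1)) ^ k = (1 - q ^ (n + j + 1))⁻¹ :=
    tsum_geometric_of_norm_lt_one (norm_q_pow hq (n + j))
  have hsu : Summable (fun i : ℕ => ‖(z * q ^ (n + 1)) ^ i‖) := summable_norm_geo hq hz n
  have hsv : Summable (fun k : ℕ => ‖(z * q ^ (n + j + 1)) ^ k‖) := summable_norm_geo hq hz (n + j)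
  have hsr : Summable (fun k : ℕ => ‖((q : ℂ) ^ (n + j + 1)) ^ k‖) := summable_norm_geo' hq (n + j)
  have h1 : Summable (fun p : ℕ × ℕ => (z * q ^ (n + 1)) ^ p.1 * (z * q ^ (n + j + 1)) ^ p.2) :=
    summable_mul_of_summable_norm hsu hsv
  have h2 : Summable (fun p : ℕ × ℕ => (z * q ^ (n + 1)) ^ p.1 * ((q : ℂ) ^ (n + j + 1)) ^ p.2) :=
    summable_mul_of_summable_norm hsu hsr
  calc z * y ^ j * q ^ (n + j + 1) / ((1 - z * q ^ (n + j + 1)) * (1 - z * q ^ (n + 1)))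
      - z * y ^ (n + j + 1) * q ^ (n + (n + j) + 2) /
        ((1 - q ^ (n + j + 1)) * (1 - z * q ^ (n + 1)))
      = z * y ^ j * q ^ (n + j + 1) *
          ((∑' i : ℕ, (z * q ^ (n + 1)) ^ i) * ∑' k : ℕ, (z * q ^ (n + j + 1)) ^ k)
        - z * y ^ (n + j + 1) * q ^ (n + (n + j) + 2) *
          ((∑' i : ℕ, (z * q ^ (n + 1)) ^ i) * ∑' k : ℕ, ((q : ℂ) ^ (n + j + 1)) ^ k) := by
        rw [g1, g2, g3, div_eq_mul_inv, div_eq_mul_inv, mul_inv, mul_inv]; ring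
    _ = z * y ^ j * q ^ (n + j + 1) *
          (∑' p : ℕ × ℕ, (z * q ^ (n + 1)) ^ p.1 * (z * q ^ (n + j + 1)) ^ p.2)
        - z * y ^ (n + j + 1) * q ^ (n + (n + j) + 2) *
          (∑' p : ℕ × ℕ, (z * q ^ (n + 1)) ^ p.1 * ((q : ℂ) ^ (n + j + 1)) ^ p.2) := by
        rw [tsum_mul_tsum_of_summable_norm hsu hsv, tsum_mul_tsum_of_summable_norm hsu hsr]
    _ = (∑' p : ℕ × ℕ, z * y ^ j * q ^ (n + j + 1) *
            ((z * q ^ (n + 1)) ^ p.1 * (z * q ^ (n + j + 1)) ^ p.2))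
        - ∑' p : ℕ × ℕ, z * y ^ (n + j + 1) * q ^ (n + (n + j) + 2) *
            ((z * q ^ (n + 1)) ^ p.1 * ((q : ℂ) ^ (n + j + 1)) ^ p.2) := by
        rw [tsum_mul_left, tsum_mul_left]
    _ = ∑' p : ℕ × ℕ, (z * y ^ j * q ^ (n + j + 1) *
            ((z * q ^ (n + 1)) ^ p.1 * (z * q ^ (n + j + 1)) ^ p.2)
          - z * y ^ (n + j + 1) * q ^ (n + (n + j) + 2) *
            ((z * q ^ (n + 1)) ^ p.1 * ((q : ℂ) ^ (n + j + 1)) ^ p.2)) :=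
        (Summable.tsum_sub (h1.mul_left _) (h2.mul_left _)).symm
    _ = ∑' ik : ℕ × ℕ, (P q y z (n, j, ik.1, ik.2) - N q y z (n, j, ik.1, ik.2)) := by
        apply tsum_congr
        rintro ⟨i, k⟩
        simp only [P, N, mul_pow, ← pow_mul, pow_add, pow_mul]
        ring


end Main

lemma lemmaA {u : ℂ} (hu : ‖u‖ < 1) :
    ∑' ik : ℕ × ℕ, u ^ (ik.1 + ik.2 + 1) = ∑' a : ℕ, ((a : ℂ) + 1) * u ^ (a + 1) := by
  have hn : Summable (fun i : ℕ => ‖u ^ i‖) :=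
    (summable_geometric_of_lt_one (norm_nonneg u) hu).congr (fun i => (norm_pow u i).symm)
  have hmul : Summable (fun m : ℕ => (m : ℂ) * u ^ m) := by
    have := summable_pow_mul_geometric_of_norm_lt_one 1 hu
    exact this.congr (fun m => by rw [pow_one])
  have h2 : ∑' a : ℕ, ((a : ℂ) + 1) * u ^ (a + 1) = u / (1 - u) ^ 2 := by
    have h0 := Summable.tsum_eq_zero_add hmul
    rw [tsum_coe_mul_geometric_of_norm_lt_one hu] at h0
    simp only [Nat.cast_zero, zero_mul, pow_zero, zero_add, Nat.cast_add, Nat.cast_one] at h0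
    exact h0.symm
  rw [h2]
  calc ∑' ik : ℕ × ℕ, u ^ (ik.1 + ik.2 + 1)
      = ∑' ik : ℕ × ℕ, u * (u ^ ik.1 * u ^ ik.2) := by
        apply tsum_congr; rintro ⟨i, k⟩
        rw [pow_add, pow_add, pow_one]; ring
    _ = u * ∑' ik : ℕ × ℕ, u ^ ik.1 * u ^ ik.2 := tsum_mul_left
    _ = u * ((∑' i : ℕ, u ^ i) * (∑' k : ℕ, u ^ k)) := by
        rw [tsum_mul_tsum_of_summable_norm hn hn]
    _ = u / (1 - u) ^ 2 := by
        rw [tsum_geometric_of_norm_lt_one hu, div_eq_mul_inv, pow_two, mul_inv]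

section Divisors

variable {q z : ℂ} (hq : ‖q‖ < 1) (hz : ‖z * q‖ < 1)

/-- `H (n, a) = (a+1) (z q^(n+1))^(a+1)` -/
def H (q z : ℂ) (p : ℕ × ℕ) : ℂ := ((p.2 : ℂ) + 1) * (z * q ^ (p.1 + 1)) ^ (p.2 + 1)

include hq hz in
lemma summable_H : Summable (H q z) := by
  have hg : Summable (fun a : ℕ => ((a : ℝ) + 1) * ‖z * q‖ ^ (a + 1)) := by
    have h1 : ‖(‖z * q‖)‖ < 1 := by rwa [Real.norm_of_nonneg (norm_nonneg _)]
    have hm : Summable (fun m : ℕ => (m : ℝ) * ‖z * q‖ ^ m) := by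
      simpa [pow_one] using summable_pow_mul_geometric_of_norm_lt_one 1 h1
    have := hm.comp_injective (add_left_injective 1)
    exact this.congr (fun a => by simp only [Function.comp]; push_cast; ring)
  have hb : Summable (fun p : ℕ × ℕ => ‖q‖ ^ p.1 * (((p.2 : ℝ) + 1) * ‖z * q‖ ^ (p.2 + 1))) := by
    have := (summable_geometric_of_lt_one (norm_nonneg q) hq).mul_of_nonneg hg
      (fun n => pow_nonneg (norm_nonneg q) n)
      (fun a => mul_nonneg (by positivity) (pow_nonneg (norm_nonneg _) _))
    exact this.congr (fun p => rfl)
  apply Summable.of_norm_bounded hb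
  rintro ⟨n, a⟩
  have e1 : z * q ^ (n + 1) = (z * q) * q ^ n := by ring
  calc ‖H q z (n, a)‖
      = ((a : ℝ) + 1) * (‖z * q‖ ^ (a + 1) * (‖q‖ ^ n) ^ (a + 1)) := by
        rw [H, norm_mul, e1, norm_pow, norm_mul, norm_pow, mul_pow]
        congr 1
        have h5 : ((a : ℂ) + 1) = ((a + 1 : ℕ) : ℂ) := by push_cast; ring
        rw [h5, Complex.norm_natCast]; push_cast; ring
    _ ≤ ((a : ℝ) + 1) * (‖z * q‖ ^ (a + 1) * ‖q‖ ^ n) := by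
        apply mul_le_mul_of_nonneg_left _ (by positivity)
        apply mul_le_mul_of_nonneg_left _ (by positivity)
        exact pow_le_of_le_one (by positivity) (pow_le_one₀ (norm_nonneg q) hq.le)
          (Nat.succ_ne_zero a)
    _ = ‖q‖ ^ n * (((a : ℝ) + 1) * ‖z * q‖ ^ (a + 1)) := by ring

/-- indicator function used for regrouping by the product of indices -/
def Find (q z : ℂ) (mp : ℕ × (ℕ × ℕ)) : ℂ :=
  if (mp.2.1 + 1) * (mp.2.2 + 1) = mp.1 + 1 then H q z mp.2 else 0

include hq hz in
lemma summable_Find : Summable (Find q z) := by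
  have hinj : Function.Injective
      (fun p : ℕ × ℕ => (((p.1 + 1) * (p.2 + 1) - 1, p) : ℕ × (ℕ × ℕ))) := by
    intro p p' h
    simpa using (Prod.ext_iff.mp h).2
  have hvan : ∀ mp ∉ Set.range (fun p : ℕ × ℕ => (((p.1 + 1) * (p.2 + 1) - 1, p) : ℕ × (ℕ × ℕ))),
      Find q z mp = 0 := by
    rintro ⟨m, p⟩ hmp
    rw [Find]
    split_ifs with h
    · exfalso
      have h' : (p.1 + 1) * (p.2 + 1) = m + 1 := h
      have hm : (p.1 + 1) * (p.2 + 1) - 1 = m := by omega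
      exact hmp ⟨p, by simp [Prod.ext_iff, hm]⟩
    · rfl
  refine (Function.Injective.summable_iff hinj hvan).mp ?_
  apply (summable_H hq hz).congr
  intro p
  have hco : (p.1 + 1) * (p.2 + 1) - 1 + 1 = (p.1 + 1) * (p.2 + 1) := by
    have h1 : 1 ≤ (p.1 + 1) * (p.2 + 1) := Nat.one_le_iff_ne_zero.mpr (by positivity)
    omega
  show H q z p = Find q z ((p.1 + 1) * (p.2 + 1) - 1, p)
  rw [Find]
  exact (if_pos hco.symm).symm

lemma inner_eval (m : ℕ) :
    ∑' p : ℕ × ℕ, Find q z (m, p) = (∑ d ∈ (m + 1).divisors, (d : ℂ) * z ^ d) * q ^ (m + 1) := by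
  classical
  set s : Finset (ℕ × ℕ) := ((m + 1).divisorsAntidiagonal).image (fun v => (v.2 - 1, v.1 - 1))
    with hs
  have hvan : ∀ p ∉ s, Find q z (m, p) = 0 := by
    rintro ⟨n, a⟩ hp
    rw [Find]
    split_ifs with h
    · exfalso
      have h' : (n + 1) * (a + 1) = m + 1 := h
      apply hp
      rw [hs]
      apply Finset.mem_image.mpr
      refine ⟨(a + 1, n + 1), ?_, by simp⟩
      rw [Nat.mem_divisorsAntidiagonal]
      exact ⟨by show (a + 1) * (n + 1) = m + 1; rw [mul_comm]; exact h', by omega⟩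
    · rfl
  rw [tsum_eq_sum hvan, hs]
  rw [Finset.sum_image]
  · have hterm : ∀ v ∈ (m + 1).divisorsAntidiagonal,
        Find q z (m, (v.2 - 1, v.1 - 1)) = (v.1 : ℂ) * z ^ v.1 * q ^ (m + 1) := by
      rintro ⟨d, c⟩ hv
      rw [Nat.mem_divisorsAntidiagonal] at hv
      have hdc : d * c = m + 1 := hv.1
      have hd : 1 ≤ d := Nat.pos_of_ne_zero (by rintro rfl; rw [Nat.zero_mul] at hdc; omega)
      have hc : 1 ≤ c := Nat.pos_of_ne_zero (by rintro rfl; rw [Nat.mul_zero] at hdc; omega)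
      have h1 : d - 1 + 1 = d := by omega
      have h2 : c - 1 + 1 = c := by omega
      show (if (c - 1 + 1) * (d - 1 + 1) = m + 1 then H q z (c - 1, d - 1) else 0)
          = (d : ℂ) * z ^ d * q ^ (m + 1)
      rw [h1, h2, if_pos (by rw [mul_comm]; exact hdc)]
      show (((d - 1 : ℕ) : ℂ) + 1) * (z * q ^ (c - 1 + 1)) ^ (d - 1 + 1)
          = (d : ℂ) * z ^ d * q ^ (m + 1)
      rw [h1, h2]
      have h3 : ((d - 1 : ℕ) : ℂ) + 1 = (d : ℂ) := by
        have h4 := congrArg (fun t : ℕ => (t : ℂ)) h1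
        push_cast at h4
        exact h4
      rw [h3, mul_pow, ← pow_mul, mul_comm c d, hdc]
      ring
    rw [Finset.sum_congr rfl hterm,
      Nat.sum_divisorsAntidiagonal (fun d c => (d : ℂ) * z ^ d * q ^ (m + 1)), Finset.sum_mul]
  · rintro ⟨d, c⟩ hv ⟨d', c'⟩ hv' h
    rw [Finset.mem_coe, Nat.mem_divisorsAntidiagonal] at hv hv'
    have hdc : d * c = m + 1 := hv.1
    have hdc' : d' * c' = m + 1 := hv'.1
    have hd : 1 ≤ d := Nat.pos_of_ne_zero (by rintro rfl; rw [Nat.zero_mul] at hdc; omega)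
    have hc : 1 ≤ c := Nat.pos_of_ne_zero (by rintro rfl; rw [Nat.mul_zero] at hdc; omega)
    have hd' : 1 ≤ d' := Nat.pos_of_ne_zero (by rintro rfl; rw [Nat.zero_mul] at hdc'; omega)
    have hc' : 1 ≤ c' := Nat.pos_of_ne_zero (by rintro rfl; rw [Nat.mul_zero] at hdc'; omega)
    have h' : c - 1 = c' - 1 ∧ d - 1 = d' - 1 := Prod.mk.injEq .. ▸ Prod.ext_iff.mp h
    simp only [Prod.mk.injEq]
    omega

include hq hz in
lemma lemmaB : ∑' p : ℕ × ℕ, H q z p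
    = ∑' m : ℕ, (∑ d ∈ (m + 1).divisors, (d : ℂ) * z ^ d) * q ^ (m + 1) := by
  have hF := summable_Find hq hz
  calc ∑' p : ℕ × ℕ, H q z p
      = ∑' p : ℕ × ℕ, ∑' m : ℕ, Find q z (m, p) := by
        apply tsum_congr
        intro p
        have hco : (p.1 + 1) * (p.2 + 1) - 1 + 1 = (p.1 + 1) * (p.2 + 1) := by
          have h1 : 1 ≤ (p.1 + 1) * (p.2 + 1) := Nat.one_le_iff_ne_zero.mpr (by positivity)
          omega
        refine ((tsum_eq_single ((p.1 + 1) * (p.2 + 1) - 1) ?_).trans ?_).symm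
        · intro m hm
          rw [Find]
          split_ifs with h
          · exact absurd (show m = (p.1 + 1) * (p.2 + 1) - 1 by
              have h' : (p.1 + 1) * (p.2 + 1) = m + 1 := h; omega) hm
          · rfl
        · rw [Find]
          exact if_pos hco.symm
    _ = ∑' m : ℕ, ∑' p : ℕ × ℕ, Find q z (m, p) := by
        have hu : Summable (Function.uncurry (fun m (p : ℕ × ℕ) => Find q z (m, p))) := hF
        exact Summable.tsum_comm hu
    _ = ∑' m : ℕ, (∑ d ∈ (m + 1).divisors, (d : ℂ) * z ^ d) * q ^ (m + 1) :=
        tsum_congr (fun m => inner_eval m)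

end Divisors

section Final

variable {q y z : ℂ} (hq : ‖q‖ < 1) (hz : ‖z * q‖ < 1)

include hq hz in
lemma final : ∑' n : ℕ, ∑' ik : ℕ × ℕ, P q y z (n, 0, ik.1, ik.2)
    = ∑' m : ℕ, (∑ d ∈ (m + 1).divisors, (d : ℂ) * z ^ d) * q ^ (m + 1) := by
  have step1 : ∀ n : ℕ, ∑' ik : ℕ × ℕ, P q y z (n, 0, ik.1, ik.2) = ∑' a : ℕ, H q z (n, a) := by
    intro n
    have hu : ‖z * q ^ (n + 1)‖ < 1 := norm_zq_pow hq hz n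
    calc ∑' ik : ℕ × ℕ, P q y z (n, 0, ik.1, ik.2)
        = ∑' ik : ℕ × ℕ, (z * q ^ (n + 1)) ^ (ik.1 + ik.2 + 1) := by
          apply tsum_congr; rintro ⟨i, k⟩
          show z ^ (i + k + 1) * y ^ 0 * q ^ ((n + 0 + 1) * (k + 1) + (n + 1) * i)
              = (z * q ^ (n + 1)) ^ (i + k + 1)
          have he : (n + 0 + 1) * (k + 1) + (n + 1) * i = (n + 1) * (i + k + 1) := by ring
          rw [he, pow_zero, mul_one, mul_pow, ← pow_mul]
      _ = ∑' a : ℕ, ((a : ℂ) + 1) * (z * q ^ (n + 1)) ^ (a + 1) := lemmaA hu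
      _ = ∑' a : ℕ, H q z (n, a) := tsum_congr (fun a => rfl)
  rw [tsum_congr step1, ← Summable.tsum_prod (summable_H hq hz)]
  exact lemmaB hq hz

variable (hy : ‖y * q‖ < 1)

include hq hy hz in
lemma grand :
    (∑' n : ℕ, ∑' j : ℕ, ∑' ik : ℕ × ℕ,
        (P q y z (n, j, ik.1, ik.2) - N q y z (n, j, ik.1, ik.2)))
      = ∑' m : ℕ, (∑ d ∈ (m + 1).divisors, (d : ℂ) * z ^ d) * q ^ (m + 1) := by
  have hP := summable_P hq hy hz
  have hN := summable_N hq hy hz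
  have hQ := summable_Q hq hy hz
  have hG : Summable (fun t : T => P q y z t - N q y z t) := hP.sub hN
  have eA : ∑' t : T, (P q y z t - N q y z t)
      = ∑' n : ℕ, ∑' j : ℕ, ∑' ik : ℕ × ℕ,
          (P q y z (n, j, ik.1, ik.2) - N q y z (n, j, ik.1, ik.2)) := by
    rw [Summable.tsum_prod hG]
    apply tsum_congr; intro n
    rw [Summable.tsum_prod (hG.prod_factor n)]
  have eQ : ∑' t : T, N q y z t = ∑' t : T, Q q y z t := by
    calc ∑' t : T, N q y z t = ∑' t : T, Q q y z (e t) :=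
          tsum_congr (fun t => N_eq_Q_comp_e q y z t)
      _ = ∑' t : T, Q q y z t := e.tsum_eq (Q q y z)
  have hP0 : Summable (fun s : ℕ × (ℕ × ℕ) => P q y z (s.1, 0, s.2)) := by
    apply hP.comp_injective
    rintro ⟨a, b⟩ ⟨a', b'⟩ h
    simp only [Prod.mk.injEq] at h ⊢
    exact ⟨h.1, h.2.2⟩
  have hA0 : Summable (fun n : ℕ => ∑' ik : ℕ × ℕ, P q y z (n, 0, ik.1, ik.2)) := hP0.prod
  have eB : ∀ n : ℕ, ∑' j : ℕ, ∑' ik : ℕ × ℕ, Q q y z (n, j, ik.1, ik.2)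
      = ∑' t2 : ℕ × ℕ × ℕ, Q q y z (n, t2) := fun n => (Summable.tsum_prod (hQ.prod_factor n)).symm
  have hB0 : Summable (fun n : ℕ => ∑' j : ℕ, ∑' ik : ℕ × ℕ, Q q y z (n, j, ik.1, ik.2)) :=
    hQ.prod.congr (fun n => (eB n).symm)
  have eP : ∑' t : T, P q y z t
      = (∑' n : ℕ, ∑' ik : ℕ × ℕ, P q y z (n, 0, ik.1, ik.2)) + ∑' t : T, Q q y z t := by
    calc ∑' t : T, P q y z t
        = ∑' n : ℕ, ∑' j : ℕ, ∑' ik : ℕ × ℕ, P q y z (n, j, ik.1, ik.2) := by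
          rw [Summable.tsum_prod hP]
          apply tsum_congr; intro n
          rw [Summable.tsum_prod (hP.prod_factor n)]
      _ = ∑' n : ℕ, ((∑' ik : ℕ × ℕ, P q y z (n, 0, ik.1, ik.2))
            + ∑' j : ℕ, ∑' ik : ℕ × ℕ, Q q y z (n, j, ik.1, ik.2)) := by
          apply tsum_congr; intro n
          exact Summable.tsum_eq_zero_add ((hP.prod_factor n).prod)
      _ = (∑' n : ℕ, ∑' ik : ℕ × ℕ, P q y z (n, 0, ik.1, ik.2))
            + ∑' n : ℕ, ∑' j : ℕ, ∑' ik : ℕ × ℕ, Q q y z (n, j, ik.1, ik.2) :=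
          Summable.tsum_add hA0 hB0
      _ = (∑' n : ℕ, ∑' ik : ℕ × ℕ, P q y z (n, 0, ik.1, ik.2)) + ∑' t : T, Q q y z t := by
          rw [tsum_congr eB, ← Summable.tsum_prod hQ]
  rw [← eA, Summable.tsum_sub hP hN, eQ, eP, add_sub_cancel_right]
  exact final hq hz

end Final

end

end S13

theorem stmt13 (q x z : ℂ) (hq0 : 0 < ‖q‖) (hq1 : ‖q‖ < 1)
    (hx : ‖q‖ < ‖x‖) (hzq : ‖z * q‖ < 1) :
    (∑' n : ℕ, ∑' j : ℕ,
        (z * x ^ (-(j : ℤ)) * q ^ (n + j + 1) /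
            ((1 - z * q ^ (n + j + 1)) * (1 - z * q ^ (n + 1)))
          - z * x ^ (-((n : ℤ) + j) - 1) * q ^ (n + (n + j) + 2) /
            ((1 - q ^ (n + j + 1)) * (1 - z * q ^ (n + 1))))) =
      ∑' n : ℕ, (∑ d ∈ (n + 1).divisors, (d : ℂ) * z ^ d) * q ^ (n + 1) := by
  have hq : ‖q‖ < 1 := by exact hq1
  have hz : ‖z * q‖ < 1 := by exact hzq
  have hx0 : x ≠ 0 := by
    intro h
    rw [h] at hx
    simp only [norm_zero] at hx
    exact absurd hx (not_lt.mpr hq0.le)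
  set y := x⁻¹ with hy_def
  have hy : ‖y * q‖ < 1 := by
    rw [norm_mul, hy_def, norm_inv]
    have hxpos : 0 < ‖x‖ := by
      exact lt_trans hq0 hx
    rw [← div_eq_inv_mul, div_lt_one hxpos]
    exact hx
  have hterm : ∀ n j : ℕ,
      (z * x ^ (-(j : ℤ)) * q ^ (n + j + 1) /
          ((1 - z * q ^ (n + j + 1)) * (1 - z * q ^ (n + 1)))
        - z * x ^ (-((n : ℤ) + j) - 1) * q ^ (n + (n + j) + 2) /
          ((1 - q ^ (n + j + 1)) * (1 - z * q ^ (n + 1))))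
      = ∑' ik : ℕ × ℕ, (S13.P q y z (n, j, ik.1, ik.2) - S13.N q y z (n, j, ik.1, ik.2)) := by
    intro n j
    have e1 : x ^ (-(j : ℤ)) = y ^ j := by
      rw [zpow_neg, zpow_natCast, hy_def, inv_pow]
    have e2 : x ^ (-((n : ℤ) + j) - 1) = y ^ (n + j + 1) := by
      have h3 : (-((n : ℤ) + j) - 1) = -(((n + j + 1 : ℕ) : ℤ)) := by push_cast; ring
      rw [h3, zpow_neg, zpow_natCast, hy_def, inv_pow]
    rw [e1, e2]
    exact S13.inner_eq hq hz n j
  calc (∑' n : ℕ, ∑' j : ℕ,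
        (z * x ^ (-(j : ℤ)) * q ^ (n + j + 1) /
            ((1 - z * q ^ (n + j + 1)) * (1 - z * q ^ (n + 1)))
          - z * x ^ (-((n : ℤ) + j) - 1) * q ^ (n + (n + j) + 2) /
            ((1 - q ^ (n + j + 1)) * (1 - z * q ^ (n + 1)))))
      = ∑' n : ℕ, ∑' j : ℕ, ∑' ik : ℕ × ℕ,
          (S13.P q y z (n, j, ik.1, ik.2) - S13.N q y z (n, j, ik.1, ik.2)) := by
        apply tsum_congr; intro n
        apply tsum_congr; intro j
        exact hterm n j
    _ = ∑' n : ℕ, (∑ d ∈ (n + 1).divisors, (d : ℂ) * z ^ d) * q ^ (n + 1) :=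
        S13.grand hq hz hy
end

section
/- Let q be a complex number with 0 < |q| < 1 and let x be a complex number with |x| < 1. Then x·A(x, q, q², q; q) = (x²/(2q²))·( L(q²,x,x;q) − L(x,q;q)² ) + (x/q)·( L(x,q;q)·L(q,q;q) − L(xq,q,q;q) ). -/
open Finset

noncomputable def auxH (q : ℂ) (n : ℕ) : ℂ := ∑ i ∈ Finset.range n, q ^ (i + 1) / (1 - q ^ (i + 1))

noncomputable def auxD (q : ℂ) (n : ℕ) : ℂ :=
  ∑ i ∈ Finset.range n, 1 / ((1 - q ^ (i + 1)) * (1 - q ^ (n - i)))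

lemma auxH_succ (q : ℂ) (n : ℕ) :
    auxH q (n + 1) = auxH q n + q ^ (n + 1) / (1 - q ^ (n + 1)) :=
  Finset.sum_range_succ _ _

lemma aux_frac {A B : ℂ} (d1 : 1 - A ≠ 0) (d2 : 1 - B ≠ 0) :
    ((1 - A) + A * (1 - B)) * (1 / ((1 - A) * (1 - B))) = 1 / (1 - B) + A / (1 - A) := by
  rw [mul_one_div, div_add_div _ _ d2 d1, div_eq_div_iff (mul_ne_zero d1 d2) (mul_ne_zero d2 d1)]
  ring

lemma auxD_key (q : ℂ) (hdne : ∀ m : ℕ, (1 : ℂ) - q ^ (m + 1) ≠ 0) (n : ℕ) :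
    (1 - q ^ (n + 1)) * auxD q n = n + 2 * auxH q n := by
  have h1 : ∀ i ∈ Finset.range n,
      (1 - q ^ (n + 1)) * (1 / ((1 - q ^ (i + 1)) * (1 - q ^ (n - i))))
        = 1 / (1 - q ^ (n - i)) + q ^ (i + 1) / (1 - q ^ (i + 1)) := by
    intro i hi
    have hi' : i < n := Finset.mem_range.mp hi
    have d1 : (1 : ℂ) - q ^ (i + 1) ≠ 0 := hdne i
    have d2 : (1 : ℂ) - q ^ (n - i) ≠ 0 := by
      have := hdne (n - i - 1)
      rwa [show n - i - 1 + 1 = n - i from by omega] at this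
    have e2 : q ^ (i + 1) * q ^ (n - i) = q ^ (n + 1) := by
      rw [← pow_add]; congr 1; omega
    have e3 : (1 : ℂ) - q ^ (n + 1) = (1 - q ^ (i + 1)) + q ^ (i + 1) * (1 - q ^ (n - i)) := by
      rw [mul_sub, mul_one, e2]; ring
    rw [e3]
    exact aux_frac d1 d2
  rw [auxD, Finset.mul_sum, Finset.sum_congr rfl h1, Finset.sum_add_distrib]
  have h2 : ∑ i ∈ Finset.range n, (1 : ℂ) / (1 - q ^ (n - i))
      = ∑ i ∈ Finset.range n, 1 / (1 - q ^ (i + 1)) := by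
    rw [← Finset.sum_range_reflect (fun i => (1 : ℂ) / (1 - q ^ (i + 1))) n]
    refine Finset.sum_congr rfl fun j hj => ?_
    have hj' : j < n := Finset.mem_range.mp hj
    rw [show n - 1 - j + 1 = n - j from by omega]
  have h3 : ∀ i ∈ Finset.range n,
      (1 : ℂ) / (1 - q ^ (i + 1)) = 1 + q ^ (i + 1) / (1 - q ^ (i + 1)) := by
    intro i _
    have d1 : (1 : ℂ) - q ^ (i + 1) ≠ 0 := hdne i
    field_simp
    ring
  rw [h2, Finset.sum_congr rfl h3, Finset.sum_add_distrib, Finset.sum_const, Finset.card_range]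
  simp only [auxH, nsmul_eq_mul, mul_one]
  ring

lemma aux_sum_norm {a : ℂ} (ha : ‖a‖ < 1) {f : ℕ → ℂ} {C : ℝ}
    (hC : ∀ n : ℕ, ‖f n‖ ≤ C * (n + 1)) :
    Summable fun n : ℕ => ‖a ^ n * f n‖ := by
  have ha0 : (0 : ℝ) ≤ ‖a‖ := norm_nonneg a
  have h1 : Summable (fun n : ℕ => (n : ℝ) * ‖a‖ ^ n) := by
    simpa using summable_pow_mul_geometric_of_norm_lt_one 1
      (r := (‖a‖ : ℝ)) (by rwa [Real.norm_eq_abs, abs_of_nonneg ha0])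
  have h2 : Summable (fun n : ℕ => ‖a‖ ^ n) := summable_geometric_of_lt_one ha0 ha
  refine Summable.of_nonneg_of_le (fun n => norm_nonneg _) (fun n => ?_)
    (((h1.add h2).mul_left C))
  calc ‖a ^ n * f n‖ = ‖a‖ ^ n * ‖f n‖ := by
        rw [norm_mul, norm_pow]
    _ ≤ ‖a‖ ^ n * (C * (n + 1)) := by
        exact mul_le_mul_of_nonneg_left (hC n) (pow_nonneg ha0 n)
    _ = C * ((n : ℝ) * ‖a‖ ^ n + ‖a‖ ^ n) := by ring

lemma aux_sum {a : ℂ} (ha : ‖a‖ < 1) {f : ℕ → ℂ} {C : ℝ}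
    (hC : ∀ n : ℕ, ‖f n‖ ≤ C * (n + 1)) :
    Summable fun n : ℕ => a ^ n * f n :=
  Summable.of_norm (by simpa using aux_sum_norm ha hC)

set_option maxHeartbeats 3200000 in
theorem stmt18 (q x : ℂ) (hq0 : 0 < ‖q‖) (hq1 : ‖q‖ < 1)
    (hx : ‖x‖ < 1) :
    x * doubleLambert x q (q ^ 2) q q =
      (x ^ 2 / (2 * q ^ 2)) * (lambert2 (q ^ 2) x x q - (lambert1 x q q) ^ 2)
        + (x / q) * (lambert1 x q q * lambert1 q q q - lambert2 (x * q) q q q) := by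
  have hq : q ≠ 0 := by
    intro h; rw [h] at hq0; simp at hq0
  have hr0 : (0:ℝ) ≤ ‖q‖ := norm_nonneg q
  have hs0 : (0:ℝ) ≤ ‖x‖ := norm_nonneg x
  have h1r : (0:ℝ) < 1 - ‖q‖ := by linarith
  have hpowle : ∀ m : ℕ, ‖q‖ ^ m ≤ 1 := fun m => pow_le_one₀ hr0 hq1.le
  have habs_pow : ∀ m : ℕ, ‖q ^ (m + 1)‖ ≤ ‖q‖ := by
    intro m
    rw [norm_pow, pow_succ]
    calc ‖q‖ ^ m * ‖q‖ ≤ 1 * ‖q‖ :=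
          mul_le_mul_of_nonneg_right (hpowle m) hr0
      _ = ‖q‖ := one_mul _
  have hd : ∀ m : ℕ, 1 - ‖q‖ ≤ ‖1 - q ^ (m + 1)‖ := by
    intro m
    have h1 : ‖(1:ℂ)‖ - ‖q ^ (m+1)‖ ≤ ‖(1:ℂ) - q ^ (m+1)‖ := norm_sub_norm_le _ _
    rw [norm_one] at h1
    have := habs_pow m
    linarith
  have hdne : ∀ m : ℕ, (1:ℂ) - q ^ (m + 1) ≠ 0 := by
    intro m h0
    have := hd m
    rw [h0] at this; simp at this; linarith
  have hxq : ∀ n : ℕ, ‖x * q ^ n‖ < 1 := by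
    intro n
    rw [norm_mul, norm_pow]
    calc ‖x‖ * ‖q‖ ^ n ≤ ‖x‖ * 1 :=
          mul_le_mul_of_nonneg_left (hpowle n) hs0
      _ = ‖x‖ := mul_one _
      _ < 1 := hx
  have hxdne : ∀ n : ℕ, (1:ℂ) - x * q ^ n ≠ 0 := by
    intro n h0
    have h1 : ‖(1:ℂ)‖ - ‖x * q^n‖ ≤ ‖(1:ℂ) - x * q^n‖ := norm_sub_norm_le _ _
    rw [h0] at h1
    simp only [norm_one, norm_zero] at h1
    linarith [hxq n]
  have hb1 : ∀ m : ℕ, ‖(1 - q ^ (m + 1))⁻¹‖ ≤ (1 - ‖q‖)⁻¹ := by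
    intro m
    rw [norm_inv]
    exact inv_anti₀ h1r (hd m)
  have hlin : ∀ (c : ℝ), 0 ≤ c → ∀ n : ℕ, c ≤ c * (n + 1) := by
    intro c hc n
    nlinarith [Nat.cast_nonneg (α := ℝ) n]
  have aux_div_bound : ∀ (u v : ℂ) (b : ℝ), 0 < b → b ≤ ‖v‖ →
      ‖u / v‖ ≤ ‖u‖ / b := by
    intro u v b hb hv
    rw [norm_div]
    exact div_le_div_of_nonneg_left (norm_nonneg u) hb hv
  -- summability of the K-series with shifted exponent
  have bK : ∀ b : ℕ, ‖q * (1 - q ^ (b+1))⁻¹‖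
      ≤ (‖q‖ * (1 - ‖q‖)⁻¹) * (b + 1) := by
    intro b
    rw [norm_mul]
    calc ‖q‖ * ‖(1 - q ^ (b+1))⁻¹‖
        ≤ ‖q‖ * (1 - ‖q‖)⁻¹ :=
          mul_le_mul_of_nonneg_left (hb1 b) hr0
      _ ≤ _ := hlin _ (by positivity) b
  have sfK : Summable (fun b : ℕ => q ^ (b+1) / (1 - q ^ (b+1))) :=
    (aux_sum hq1 bK).congr (fun b => by rw [div_eq_mul_inv]; ring)
  -- value of the inner tail sums
  have hgval : ∀ n : ℕ, (∑' j : ℕ, q ^ j / (1 - q ^ (n+j+2)))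
      = (q * lambert1 q q q - auxH q (n+1)) / q ^ (n+2) := by
    intro n
    have h1 := Summable.sum_add_tsum_nat_add (n+1) sfK
    have h2 : (∑' b : ℕ, q ^ (b+1) / (1 - q ^ (b+1))) = q * lambert1 q q q := by
      rw [lambert1, ← tsum_mul_left]
      refine tsum_congr fun m => ?_
      rw [show (1:ℂ) - q * q ^ m = 1 - q ^ (m+1) from by ring, div_eq_mul_inv, div_eq_mul_inv]
      ring
    have h3 : (∑' j : ℕ, q ^ (j+(n+1)+1) / (1 - q ^ (j+(n+1)+1)))
        = q ^ (n+2) * ∑' j : ℕ, q ^ j / (1 - q ^ (n+j+2)) := by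
      rw [← tsum_mul_left]
      refine tsum_congr fun j => ?_
      rw [show j+(n+1)+1 = n+j+2 from by omega, div_eq_mul_inv, div_eq_mul_inv]
      ring
    rw [eq_div_iff (pow_ne_zero (n+2) hq)]
    rw [h2, h3] at h1
    simp only [auxH]
    linear_combination h1
  -- inner sum of the double Lambert series
  have hinner : ∀ n : ℕ, (∑' j : ℕ, x ^ n * q ^ (n + j) / ((1 - q * q ^ n) * (1 - q ^ 2 * q ^ (n + j))))
      = x ^ n * q ^ n / (1 - q ^ (n+1)) * ((q * lambert1 q q q - auxH q (n+1)) / q ^ (n+2)) := by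
    intro n
    rw [← hgval n, ← tsum_mul_left]
    refine tsum_congr fun j => ?_
    rw [show (1:ℂ) - q * q ^ n = 1 - q ^ (n+1) from by ring,
        show (1:ℂ) - q ^ 2 * q ^ (n+j) = 1 - q ^ (n+j+2) from by ring,
        div_mul_div_comm]
    congr 1
    ring
  have hA : x * doubleLambert x q (q ^ 2) q q
      = ∑' n : ℕ, x ^ (n+1) * ((q * lambert1 q q q - auxH q (n+1)) / (q ^ 2 * (1 - q ^ (n+1)))) := by
    rw [doubleLambert, ← tsum_mul_left]
    refine tsum_congr fun n => ?_
    rw [hinner n]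
    have d1 : (1:ℂ) - q ^ (n+1) ≠ 0 := hdne n
    field_simp
    ring
  -- expansion of lambert2 (q^2) x x q
  have hsx : Summable (fun k : ℕ => ((k:ℝ)+1) * ‖x‖ ^ k) := by
    have h1 : Summable (fun k : ℕ => (k:ℝ) * ‖x‖ ^ k) := by
      simpa using summable_pow_mul_geometric_of_norm_lt_one 1
        (r := (‖x‖ : ℝ)) (by rwa [Real.norm_eq_abs, abs_of_nonneg hs0])
    have h2 : Summable (fun k : ℕ => ‖x‖ ^ k) := summable_geometric_of_lt_one hs0 hx
    exact Summable.congr (h1.add h2) (fun k => by ring)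
  have hq2 : ‖q‖ ^ 2 < 1 := by nlinarith
  have hGsum : Summable (fun p : ℕ × ℕ =>
      (‖q‖ ^ 2) ^ p.1 * (((p.2:ℝ)+1) * ‖x‖ ^ p.2)) :=
    Summable.mul_of_nonneg (summable_geometric_of_lt_one (by positivity) hq2) hsx
      (fun n => by positivity) (fun k => by positivity)
  have hFs : Summable (Function.uncurry (fun (n k : ℕ) => ((k:ℂ)+1) * x ^ k * q ^ (n*(k+2)))) := by
    refine Summable.of_norm_bounded hGsum ?_
    rintro ⟨n, k⟩
    simp only [Function.uncurry]
    rw [norm_mul, norm_mul, norm_pow, norm_pow]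
    have ek : ‖(k:ℂ)+1‖ = (k:ℝ)+1 := by
      rw [show ((k:ℂ)+1) = ((k+1:ℕ):ℂ) from by push_cast; ring, Complex.norm_natCast]
      push_cast; ring
    rw [ek]
    have hpow2 : ‖q‖ ^ (n*(k+2)) ≤ (‖q‖ ^ 2) ^ n := by
      calc ‖q‖ ^ (n*(k+2)) ≤ ‖q‖ ^ (n*2) :=
            pow_le_pow_of_le_one hr0 hq1.le (Nat.mul_le_mul_left n (by omega))
        _ = (‖q‖ ^ 2) ^ n := by rw [← pow_mul, mul_comm]
    calc ((k:ℝ)+1) * ‖x‖ ^ k * ‖q‖ ^ (n*(k+2))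
        ≤ ((k:ℝ)+1) * ‖x‖ ^ k * (‖q‖ ^ 2) ^ n := by
          exact mul_le_mul_of_nonneg_left hpow2 (by positivity)
      _ = (‖q‖ ^ 2) ^ n * (((k:ℝ)+1) * ‖x‖ ^ k) := by ring
  have h1B : ∀ n : ℕ, HasSum (fun k : ℕ => ((k:ℂ)+1) * x ^ k * q ^ (n*(k+2)))
      ((q ^ 2) ^ n / ((1 - x * q ^ n) * (1 - x * q ^ n))) := by
    intro n
    have hu : ‖x * q ^ n‖ < 1 := by exact hxq n
    have hgeo := hasSum_geometric_of_norm_lt_one hu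
    have hcoe := hasSum_coe_mul_geometric_of_norm_lt_one hu
    have h2 : HasSum (fun k : ℕ => ((k:ℂ)+1) * (x * q ^ n) ^ k)
        (1 / ((1 - x * q ^ n) * (1 - x * q ^ n))) := by
      have e1 : (fun k : ℕ => ((k:ℂ)+1) * (x * q ^ n) ^ k)
          = fun k : ℕ => (k:ℂ) * (x * q ^ n) ^ k + (x * q ^ n) ^ k := by
        funext k; ring
      have e2 : (1:ℂ) / ((1 - x * q ^ n) * (1 - x * q ^ n))
          = (x * q ^ n) / (1 - x * q ^ n) ^ 2 + (1 - x * q ^ n)⁻¹ := by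
        have d := hxdne n
        field_simp
        ring
      rw [e1, e2]
      exact hcoe.add hgeo
    have h3 := h2.mul_left ((q ^ 2) ^ n)
    have e4 : (fun k : ℕ => (q ^ 2) ^ n * (((k:ℂ)+1) * (x * q ^ n) ^ k))
        = fun k : ℕ => ((k:ℂ)+1) * x ^ k * q ^ (n*(k+2)) := by
      funext k; ring
    have e5 : (q ^ 2) ^ n / ((1 - x * q ^ n) * (1 - x * q ^ n))
        = (q ^ 2) ^ n * (1 / ((1 - x * q ^ n) * (1 - x * q ^ n))) := by
      rw [mul_one_div]
    rw [e5]
    exact e4 ▸ h3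
  have hB : lambert2 (q ^ 2) x x q = ∑' k : ℕ, ((k:ℂ)+1) * x ^ k * (1 - q ^ (k+2))⁻¹ := by
    rw [lambert2]
    calc (∑' n : ℕ, (q ^ 2) ^ n / ((1 - x * q ^ n) * (1 - x * q ^ n)))
        = ∑' n : ℕ, ∑' k : ℕ, ((k:ℂ)+1) * x ^ k * q ^ (n*(k+2)) :=
          tsum_congr fun n => ((h1B n).tsum_eq).symm
      _ = ∑' k : ℕ, ∑' n : ℕ, ((k:ℂ)+1) * x ^ k * q ^ (n*(k+2)) := (Summable.tsum_comm hFs).symm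
      _ = ∑' k : ℕ, ((k:ℂ)+1) * x ^ k * (1 - q ^ (k+2))⁻¹ := by
          refine tsum_congr fun k => ?_
          have e1 : ∀ n : ℕ, ((k:ℂ)+1) * x ^ k * q ^ (n*(k+2))
              = ((k:ℂ)+1) * x ^ k * (q ^ (k+2)) ^ n := by
            intro n; rw [← pow_mul, mul_comm (k+2) n]
          rw [tsum_congr e1, tsum_mul_left, tsum_geometric_of_norm_lt_one
            (by rw [norm_pow]; exact pow_lt_one₀ hr0 hq1 (by omega))]
  -- Cauchy product for lambert1 x q q squared
  have hnormL : Summable (fun n : ℕ => ‖x ^ n / (1 - q * q ^ n)‖) := by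
    have h0 := aux_sum_norm hx (f := fun n => (1 - q ^ (n+1))⁻¹)
      (C := (1 - ‖q‖)⁻¹) (fun n => (hb1 n).trans (hlin _ (by positivity) n))
    refine h0.congr fun n => ?_
    rw [div_eq_mul_inv, show (1:ℂ) - q * q ^ n = 1 - q ^ (n+1) from by ring]
  have hP : lambert1 x q q ^ 2 = ∑' n : ℕ, x ^ n * auxD q (n+1) := by
    rw [pow_two]
    simp only [lambert1]
    rw [tsum_mul_tsum_eq_tsum_sum_antidiagonal_of_summable_norm hnormL hnormL]
    refine tsum_congr fun n => ?_
    calc (∑ kl ∈ Finset.HasAntidiagonal.antidiagonal n, x ^ kl.1 / (1 - q * q ^ kl.1) * (x ^ kl.2 / (1 - q * q ^ kl.2)))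
        = ∑ i ∈ Finset.range (n+1), x ^ i / (1 - q * q ^ i) * (x ^ (n-i) / (1 - q * q ^ (n-i))) :=
          Finset.Nat.sum_antidiagonal_eq_sum_range_succ
            (fun i j => x ^ i / (1 - q * q ^ i) * (x ^ j / (1 - q * q ^ j))) n
      _ = x ^ n * auxD q (n+1) := by
          rw [auxD, Finset.mul_sum]
          refine Finset.sum_congr rfl fun i hi => ?_
          have hi' : i < n + 1 := Finset.mem_range.mp hi
          have e1 : x ^ i * x ^ (n-i) = x ^ n := by rw [← pow_add]; congr 1; omega
          have e2 : (1:ℂ) - q * q ^ i = 1 - q ^ (i+1) := by ring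
          have e3 : (1:ℂ) - q * q ^ (n-i) = 1 - q ^ (n+1-i) := by
            rw [show n+1-i = (n-i)+1 from by omega]; ring
          rw [e2, e3, div_mul_div_comm, e1, mul_one_div]
  -- summability of the four series
  have hC2q : (2:ℂ) * q ^ 2 ≠ 0 := mul_ne_zero two_ne_zero (pow_ne_zero 2 hq)
  have habs2q : 0 < ‖2 * q ^ 2‖ := norm_pos_iff.mpr hC2q
  have b1 : ∀ n : ℕ, ‖x * (n:ℂ) / (2 * q ^ 2 * (1 - q ^ (n+1)))‖
      ≤ (‖x‖ / (‖2 * q ^ 2‖ * (1 - ‖q‖))) * (n + 1) := by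
    intro n
    have hden : ‖2 * q ^ 2‖ * (1 - ‖q‖)
        ≤ ‖2 * q ^ 2 * (1 - q ^ (n+1))‖ := by
      rw [show ‖2 * q ^ 2 * (1 - q ^ (n+1))‖
          = ‖2 * q ^ 2‖ * ‖1 - q ^ (n+1)‖ from norm_mul _ _]
      exact mul_le_mul_of_nonneg_left (hd n) (norm_nonneg _)
    have hbpos : 0 < ‖2 * q ^ 2‖ * (1 - ‖q‖) := mul_pos habs2q h1r
    calc ‖x * (n:ℂ) / (2 * q ^ 2 * (1 - q ^ (n+1)))‖
        ≤ ‖x * (n:ℂ)‖ / (‖2 * q ^ 2‖ * (1 - ‖q‖)) :=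
          aux_div_bound _ _ _ hbpos hden
      _ = (‖x‖ / (‖2 * q ^ 2‖ * (1 - ‖q‖))) * (n:ℝ) := by
          rw [norm_mul, Complex.norm_natCast]; ring
      _ ≤ _ := mul_le_mul_of_nonneg_left (by linarith [Nat.cast_nonneg (α := ℝ) n])
          (by positivity)
  have sg1 : Summable (fun n : ℕ => x ^ (n+1) * (n:ℂ) / (2 * q ^ 2 * (1 - q ^ (n+1)))) :=
    (aux_sum hx b1).congr (fun n => by ring)
  have hddb : ∀ n : ℕ, ‖auxD q n‖
      ≤ (1 - ‖q‖)⁻¹ * (1 - ‖q‖)⁻¹ * n := by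
    intro n
    calc ‖auxD q n‖
        ≤ ∑ i ∈ Finset.range n, ‖1 / ((1 - q ^ (i+1)) * (1 - q ^ (n-i)))‖ := by
          rw [auxD]; exact norm_sum_le _ _
      _ ≤ ∑ _i ∈ Finset.range n, (1 - ‖q‖)⁻¹ * (1 - ‖q‖)⁻¹ := by
          refine Finset.sum_le_sum fun i hi => ?_
          have hi' : i < n := Finset.mem_range.mp hi
          have b2 : 1 - ‖q‖ ≤ ‖1 - q ^ (n-i)‖ := by
            have := hd (n-i-1); rwa [show n-i-1+1 = n-i from by omega] at this
          rw [one_div, norm_inv, norm_mul, mul_inv]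
          exact mul_le_mul (inv_anti₀ h1r (hd i)) (inv_anti₀ h1r b2)
            (by positivity) (by positivity)
      _ = (1 - ‖q‖)⁻¹ * (1 - ‖q‖)⁻¹ * n := by
          rw [Finset.sum_const, Finset.card_range, nsmul_eq_mul]; ring
  have b2 : ∀ n : ℕ, ‖x * auxD q n / (2 * q ^ 2)‖
      ≤ (‖x‖ * ((1 - ‖q‖)⁻¹ * (1 - ‖q‖)⁻¹) / ‖2 * q ^ 2‖) * (n + 1) := by
    intro n
    calc ‖x * auxD q n / (2 * q ^ 2)‖
        = ‖x‖ * ‖auxD q n‖ / ‖2 * q ^ 2‖ := by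
          rw [norm_div, norm_mul]
      _ ≤ ‖x‖ * ((1 - ‖q‖)⁻¹ * (1 - ‖q‖)⁻¹ * n) / ‖2 * q ^ 2‖ := by
          gcongr
          exact hddb n
      _ = (‖x‖ * ((1 - ‖q‖)⁻¹ * (1 - ‖q‖)⁻¹) / ‖2 * q ^ 2‖) * (n:ℝ) := by
          ring
      _ ≤ _ := mul_le_mul_of_nonneg_left (by linarith [Nat.cast_nonneg (α := ℝ) n])
          (by positivity)
  have sg2 : Summable (fun n : ℕ => x ^ (n+1) * auxD q n / (2 * q ^ 2)) :=
    (aux_sum hx b2).congr (fun n => by ring)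
  have b3 : ∀ n : ℕ, ‖x * lambert1 q q q / (q * (1 - q ^ (n+1)))‖
      ≤ (‖x * lambert1 q q q‖ / (‖q‖ * (1 - ‖q‖))) * (n + 1) := by
    intro n
    calc ‖x * lambert1 q q q / (q * (1 - q ^ (n+1)))‖
        ≤ ‖x * lambert1 q q q‖ / (‖q‖ * (1 - ‖q‖)) :=
          aux_div_bound _ _ _ (mul_pos hq0 h1r)
            (by rw [norm_mul]; exact mul_le_mul_of_nonneg_left (hd n) hr0)
      _ ≤ _ := hlin _ (by positivity) n
  have sg3 : Summable (fun n : ℕ => x ^ (n+1) * lambert1 q q q / (q * (1 - q ^ (n+1)))) :=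
    (aux_sum hx b3).congr (fun n => by ring)
  have b4 : ∀ n : ℕ, ‖x * q ^ n / (q * (1 - q ^ (n+1)) ^ 2)‖
      ≤ (‖x‖ / (‖q‖ * ((1 - ‖q‖) * (1 - ‖q‖)))) * (n + 1) := by
    intro n
    have hden4 : ‖q‖ * ((1 - ‖q‖) * (1 - ‖q‖))
        ≤ ‖q * (1 - q ^ (n+1)) ^ 2‖ := by
      rw [norm_mul, norm_pow]
      exact mul_le_mul_of_nonneg_left
        (by nlinarith [hd n, norm_nonneg (1 - q ^ (n+1))]) hr0
    calc ‖x * q ^ n / (q * (1 - q ^ (n+1)) ^ 2)‖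
        ≤ ‖x * q ^ n‖ / (‖q‖ * ((1 - ‖q‖) * (1 - ‖q‖))) :=
          aux_div_bound _ _ _ (mul_pos hq0 (mul_pos h1r h1r)) hden4
      _ ≤ ‖x‖ / (‖q‖ * ((1 - ‖q‖) * (1 - ‖q‖))) := by
          gcongr
          calc ‖x * q ^ n‖ = ‖x‖ * ‖q‖ ^ n := by
                rw [norm_mul, norm_pow]
            _ ≤ ‖x‖ * 1 := mul_le_mul_of_nonneg_left (hpowle n) hs0
            _ = ‖x‖ := mul_one _
      _ ≤ _ := hlin _ (by positivity) n
  have sg4 : Summable (fun n : ℕ => x ^ (n+1) * q ^ n / (q * (1 - q ^ (n+1)) ^ 2)) :=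
    (aux_sum hx b4).congr (fun n => by ring)
  -- the four pieces of the right-hand side
  have hT1 : x ^ 2 / (2 * q ^ 2) * lambert2 (q ^ 2) x x q
      = ∑' n : ℕ, x ^ (n+1) * (n:ℂ) / (2 * q ^ 2 * (1 - q ^ (n+1))) := by
    rw [hB, ← tsum_mul_left, Summable.tsum_eq_zero_add sg1]
    have z : x ^ (0+1) * ((0:ℕ):ℂ) / (2 * q ^ 2 * (1 - q ^ (0+1))) = 0 := by simp
    rw [z, zero_add]
    refine (tsum_congr fun k => ?_).symm
    have d2 : (1:ℂ) - q ^ (k+2) ≠ 0 := hdne (k+1)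
    rw [show k+1+1 = k+2 from by omega]
    push_cast
    field_simp
    ring
  have hT2 : x ^ 2 / (2 * q ^ 2) * lambert1 x q q ^ 2
      = ∑' n : ℕ, x ^ (n+1) * auxD q n / (2 * q ^ 2) := by
    rw [hP, ← tsum_mul_left, Summable.tsum_eq_zero_add sg2]
    have z : x ^ (0+1) * auxD q 0 / (2 * q ^ 2) = 0 := by
      simp [auxD]
    rw [z, zero_add]
    refine (tsum_congr fun n => ?_).symm
    field_simp
    ring
  have hT3 : x / q * (lambert1 x q q * lambert1 q q q)
      = ∑' n : ℕ, x ^ (n+1) * lambert1 q q q / (q * (1 - q ^ (n+1))) := by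
    have e1 : lambert1 x q q * lambert1 q q q
        = ∑' n : ℕ, x ^ n / (1 - q * q ^ n) * lambert1 q q q := tsum_mul_right.symm
    rw [e1, ← tsum_mul_left]
    refine tsum_congr fun n => ?_
    have d1 : (1:ℂ) - q ^ (n+1) ≠ 0 := hdne n
    rw [show (1:ℂ) - q * q ^ n = 1 - q ^ (n+1) from by ring]
    field_simp
    ring
  have hT4 : x / q * lambert2 (x * q) q q q
      = ∑' n : ℕ, x ^ (n+1) * q ^ n / (q * (1 - q ^ (n+1)) ^ 2) := by
    rw [lambert2, ← tsum_mul_left]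
    refine tsum_congr fun n => ?_
    have d1 : (1:ℂ) - q ^ (n+1) ≠ 0 := hdne n
    rw [show (1:ℂ) - q * q ^ n = 1 - q ^ (n+1) from by ring]
    field_simp
    ring
  -- key termwise identity
  have key : ∀ n : ℕ,
      x ^ (n+1) * (n:ℂ) / (2 * q ^ 2 * (1 - q ^ (n+1))) - x ^ (n+1) * auxD q n / (2 * q ^ 2)
        + (x ^ (n+1) * lambert1 q q q / (q * (1 - q ^ (n+1)))
            - x ^ (n+1) * q ^ n / (q * (1 - q ^ (n+1)) ^ 2))
      = x ^ (n+1) * ((q * lambert1 q q q - auxH q (n+1)) / (q ^ 2 * (1 - q ^ (n+1)))) := by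
    intro n
    have d1 : (1:ℂ) - q ^ (n+1) ≠ 0 := hdne n
    have hstar : (1 - q ^ (n+1)) * auxD q n = (n:ℂ) + 2 * auxH q n := auxD_key q hdne n
    have hH : (1 - q ^ (n+1)) * auxH q (n+1) = (1 - q ^ (n+1)) * auxH q n + q ^ (n+1) := by
      rw [auxH_succ, mul_add]
      congr 1
      field_simp
    have n1 : (2:ℂ) * q ^ 2 * (1 - q ^ (n+1)) ≠ 0 :=
      mul_ne_zero (mul_ne_zero two_ne_zero (pow_ne_zero _ hq)) d1
    have n2 : (2:ℂ) * q ^ 2 ≠ 0 := mul_ne_zero two_ne_zero (pow_ne_zero _ hq)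
    have n3 : q * (1 - q ^ (n+1)) ≠ 0 := mul_ne_zero hq d1
    have n4 : q * (1 - q ^ (n+1)) ^ 2 ≠ 0 := mul_ne_zero hq (pow_ne_zero _ d1)
    have n5 : q ^ 2 * (1 - q ^ (n+1)) ≠ 0 := mul_ne_zero (pow_ne_zero _ hq) d1
    rw [div_sub_div _ _ n1 n2, div_sub_div _ _ n3 n4, ← mul_div_assoc,
      div_add_div _ _ (mul_ne_zero n1 n2) (mul_ne_zero n3 n4),
      div_eq_div_iff (mul_ne_zero (mul_ne_zero n1 n2) (mul_ne_zero n3 n4)) n5]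
    linear_combination (-(2:ℂ) * q ^ 6 * (1 - q ^ (n+1)) ^ 4 * x ^ (n+1)) * hstar
      + (4 * q ^ 6 * (1 - q ^ (n+1)) ^ 3 * x ^ (n+1)) * hH
  -- final assembly
  rw [hA, mul_sub, mul_sub, hT1, hT2, hT3, hT4,
    ← Summable.tsum_sub sg1 sg2, ← Summable.tsum_sub sg3 sg4, ← Summable.tsum_add (sg1.sub sg2) (sg3.sub sg4)]
  exact (tsum_congr key).symm
end
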